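/- arXiv:2301.06462 — 5 statements merged into one kernel-verified Lean document; each statement's English description precedes it below -/
import Mathlib

section
/- Let g be the pHQ-double extension of a pseudo-Hermitian quadratic Lie algebra (g₀, J₀, φ₀) by means of derivations (D, F) and s₀ ∈ g₀. If g is a nilpotent Lie algebra, then the linear maps D and F are nilpotent endomorphisms of g₀ and g₀ is a nilpotent Lie algebra. -/
open TensorProduct

/-- A pseudo-Hermitian quadratic Lie algebra structure on a real vector space `V`:
`br` is a Lie bracket, `J` is an integrable complex structure, and `φ` is a
nondegenerate symmetric invariant bilinear form compatible with `J`. -/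
structure IsPHQ (V : Type*) [AddCommGroup V] [Module ℝ V]
    (br : V → V → V) (J : V → V) (φ : V → V → ℝ) : Prop where
  br_add_left : ∀ x y z : V, br (x + y) z = br x z + br y z
  br_smul_left : ∀ (c : ℝ) (x z : V), br (c • x) z = c • br x z
  br_skew : ∀ x y : V, br x y = - br y x
  jacobi : ∀ x y z : V, br x (br y z) + br y (br z x) + br z (br x y) = 0
  J_add : ∀ x y : V, J (x + y) = J x + J y
  J_smul : ∀ (c : ℝ) (x : V), J (c • x) = c • J x
  J_sq : ∀ x : V, J (J x) = - x
  integrable : ∀ x y : V, br x y + J (br (J x) y) + J (br x (J y)) - br (J x) (J y) = 0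
  phi_add_left : ∀ x y z : V, φ (x + y) z = φ x z + φ y z
  phi_smul_left : ∀ (c : ℝ) (x y : V), φ (c • x) y = c * φ x y
  phi_symm : ∀ x y : V, φ x y = φ y x
  phi_nondeg : ∀ x : V, (∀ y : V, φ x y = 0) → x = 0
  phi_invariant : ∀ x y z : V, φ (br x y) z + φ y (br x z) = 0
  phi_hermitian : ∀ x y : V, φ (J x) (J y) = φ x y

/-- Equivalence of pseudo-Hermitian quadratic Lie algebras: a linear isomorphism
intertwining the brackets and the complex structures and preserving the metrics. -/
def PHQEquiv {V W : Type*} [AddCommGroup V] [Module ℝ V] [AddCommGroup W] [Module ℝ W]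
    (brV : V → V → V) (JV : V → V) (φV : V → V → ℝ)
    (brW : W → W → W) (JW : W → W) (φW : W → W → ℝ) : Prop :=
  ∃ ψ : V ≃ₗ[ℝ] W, (∀ x y, ψ (brV x y) = brW (ψ x) (ψ y)) ∧
    (∀ x, ψ (JV x) = JW (ψ x)) ∧ ∀ x y, φW (ψ x) (ψ y) = φV x y

/-- Lower central series of a subalgebra `W` with respect to a bracket `br`. -/
def lcsW {V : Type*} [AddCommGroup V] [Module ℝ V] (br : V → V → V)
    (W : Submodule ℝ V) : ℕ → Submodule ℝ V
  | 0 => W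
  | n + 1 => Submodule.span ℝ {w : V | ∃ x ∈ lcsW br W n, ∃ y ∈ W, w = br x y}

/-- `φ` has signature `(a, b)`: there is an orthogonal decomposition into a
negative definite subspace of dimension `a` and a positive definite subspace of
dimension `b` (the convention of the paper, where positive definite is `(0, 2n)`). -/
def hasSignature {V : Type*} [AddCommGroup V] [Module ℝ V]
    (φ : V → V → ℝ) (a b : ℕ) : Prop :=
  ∃ N P : Submodule ℝ V, N ⊓ P = ⊥ ∧ N ⊔ P = ⊤ ∧
    (∀ x ∈ N, ∀ y ∈ P, φ x y = 0) ∧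
    (∀ x ∈ N, x ≠ 0 → φ x x < 0) ∧ (∀ x ∈ P, x ≠ 0 → 0 < φ x x) ∧
    Module.finrank ℝ N = a ∧ Module.finrank ℝ P = b

/-- The bracket of the pHQ-double extension `g = ℝz ⊕ ℝz' ⊕ g₀ ⊕ ℝv' ⊕ ℝv`,
with an element `(a, b, x, c, d)` standing for `a·z + b·z' + x + c·v' + d·v`. -/
def extBr {V : Type*} [AddCommGroup V] [Module ℝ V]
    (br₀ : V → V → V) (φ₀ : V → V → ℝ) (D F : V → V) (s₀ : V) :
    (ℝ × ℝ × V × ℝ × ℝ) → (ℝ × ℝ × V × ℝ × ℝ) → (ℝ × ℝ × V × ℝ × ℝ) :=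
  fun P Q =>
    (φ₀ (F P.2.2.1) Q.2.2.1 + P.2.2.2.1 * φ₀ s₀ Q.2.2.1 - Q.2.2.2.1 * φ₀ s₀ P.2.2.1,
     φ₀ (D P.2.2.1) Q.2.2.1 - P.2.2.2.2 * φ₀ s₀ Q.2.2.1 + Q.2.2.2.2 * φ₀ s₀ P.2.2.1,
     br₀ P.2.2.1 Q.2.2.1 + P.2.2.2.2 • F Q.2.2.1 - Q.2.2.2.2 • F P.2.2.1
       + P.2.2.2.1 • D Q.2.2.1 - Q.2.2.2.1 • D P.2.2.1
       + (P.2.2.2.2 * Q.2.2.2.1 - P.2.2.2.1 * Q.2.2.2.2) • s₀,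
     0, 0)

/-- The complex structure of the pHQ-double extension:
`Jz = z'`, `Jz' = -z`, `Jv = v'`, `Jv' = -v`, `Jx = J₀x`. -/
def extJ {V : Type*} [AddCommGroup V] [Module ℝ V] (J₀ : V → V) :
    (ℝ × ℝ × V × ℝ × ℝ) → (ℝ × ℝ × V × ℝ × ℝ) :=
  fun P => (-P.2.1, P.1, J₀ P.2.2.1, P.2.2.2.2, -P.2.2.2.1)

/-- The metric of the pHQ-double extension: `φ(z,v) = φ(z',v') = 1` and `φ₀` on `g₀`. -/
def extPhi {V : Type*} [AddCommGroup V] [Module ℝ V] (φ₀ : V → V → ℝ) :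
    (ℝ × ℝ × V × ℝ × ℝ) → (ℝ × ℝ × V × ℝ × ℝ) → ℝ :=
  fun P Q => P.1 * Q.2.2.2.2 + P.2.2.2.2 * Q.1 + P.2.1 * Q.2.2.2.1 + P.2.2.2.1 * Q.2.1
    + φ₀ P.2.2.1 Q.2.2.1

/-- The data `(D, F, s₀)` needed for a pHQ-double extension of `(g₀, br₀, J₀, φ₀)`:
`D`, `F` are `φ₀`-skewsymmetric derivations with `[F + J₀D, J₀] = 0` and
`[F, D] = ad_{g₀}(s₀)`. -/
def IsPHQDblExtData (V : Type*) [AddCommGroup V] [Module ℝ V]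
    (br₀ : V → V → V) (J₀ : V → V) (φ₀ : V → V → ℝ) (D F : V → V) (s₀ : V) : Prop :=
  (∀ x y, D (x + y) = D x + D y) ∧ (∀ (c : ℝ) (x : V), D (c • x) = c • D x) ∧
  (∀ x y, F (x + y) = F x + F y) ∧ (∀ (c : ℝ) (x : V), F (c • x) = c • F x) ∧
  (∀ x y, φ₀ (D x) y = - φ₀ x (D y)) ∧ (∀ x y, φ₀ (F x) y = - φ₀ x (F y)) ∧
  (∀ x y, D (br₀ x y) = br₀ (D x) y + br₀ x (D y)) ∧
  (∀ x y, F (br₀ x y) = br₀ (F x) y + br₀ x (F y)) ∧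
  (∀ x, F (J₀ x) + J₀ (D (J₀ x)) = J₀ (F x) + J₀ (J₀ (D x))) ∧
  (∀ x, F (D x) - D (F x) = br₀ s₀ x)

/-! ### Concrete models -/

/-- Standard complex structure on `ℝ²`. -/
def j2 : (Fin 2 → ℝ) → (Fin 2 → ℝ) := fun x => ![-x 1, x 0]

/-- Positive definite Hermitian metric on `ℝ²` (the algebra `ℝ^{2,0}`). -/
def phi2 : (Fin 2 → ℝ) → (Fin 2 → ℝ) → ℝ := fun x y => x 0 * y 0 + x 1 * y 1

/-- Complex structure of the 6-dimensional Lie algebra `ℒ`, on the ordered basis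
`x₁, Jx₁, x₂, Jx₂, x₃, Jx₃`. -/
def j6 : (Fin 6 → ℝ) → (Fin 6 → ℝ) := fun x => ![-x 1, x 0, -x 3, x 2, -x 5, x 4]

/-- Bracket of `ℒ`: `[x₁, Jx₁] = x₂`, `[x₁, x₂] = -Jx₃`, `[Jx₁, x₂] = x₃` on the
ordered basis `x₁, Jx₁, x₂, Jx₂, x₃, Jx₃`. -/
def brL : (Fin 6 → ℝ) → (Fin 6 → ℝ) → (Fin 6 → ℝ) := fun x y =>
  ![0, 0, x 0 * y 1 - x 1 * y 0, 0, x 1 * y 2 - x 2 * y 1, -(x 0 * y 2 - x 2 * y 0)]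

/-- The metric of `ℒ^{4,2}`: `φ(x₁,x₃) = φ(Jx₁,Jx₃) = 1`, `φ(x₂,x₂) = φ(Jx₂,Jx₂) = 1`. -/
def phiL : (Fin 6 → ℝ) → (Fin 6 → ℝ) → ℝ := fun x y =>
  x 0 * y 4 + x 4 * y 0 + x 1 * y 5 + x 5 * y 1 + x 2 * y 2 + x 3 * y 3

/-- Complex structure on `ℝ⁸`, ordered basis `x₁, x₂, x₃, x₄, x₁*, x₂*, x₃*, x₄*` with
`Jx₁ = x₂`, `Jx₃ = x₄`, `Jx₁* = x₂*`, `Jx₃* = x₄*`. -/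
def j8 : (Fin 8 → ℝ) → (Fin 8 → ℝ) := fun x =>
  ![-x 1, x 0, -x 3, x 2, -x 5, x 4, -x 7, x 6]

/-- The metric `φ(xᵢ, xⱼ*) = δᵢⱼ` of the `T*`-extensions of the Kodaira–Thurston algebra. -/
def phi8 : (Fin 8 → ℝ) → (Fin 8 → ℝ) → ℝ := fun x y =>
  x 0 * y 4 + x 4 * y 0 + x 1 * y 5 + x 5 * y 1 + x 2 * y 6 + x 6 * y 2
    + x 3 * y 7 + x 7 * y 3

/-- A neutral pseudo-Hermitian metric on abelian `ℝ⁸` (the algebra `ℝ^{4,4}`). -/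
def phi44 : (Fin 8 → ℝ) → (Fin 8 → ℝ) → ℝ := fun x y =>
  x 0 * y 0 + x 1 * y 1 + x 2 * y 2 + x 3 * y 3
    - x 4 * y 4 - x 5 * y 5 - x 6 * y 6 - x 7 * y 7

/-- Bracket of `T*₀k`: `[x₁,x₂] = x₃`, `[x₃*,x₁] = x₂*`, `[x₃*,x₂] = -x₁*`. -/
def brT0 : (Fin 8 → ℝ) → (Fin 8 → ℝ) → (Fin 8 → ℝ) := fun x y =>
  ![0, 0, x 0 * y 1 - x 1 * y 0, 0,
    -(x 6 * y 1 - x 1 * y 6), x 6 * y 0 - x 0 * y 6, 0, 0]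

/-- Bracket of `T*_{θ₃}k`: `[x₁,x₂] = x₃`, `[x₁,x₃] = x₄*`, `[x₁,x₄] = -x₃*`,
`[x₃,x₄] = x₁*`, `[x₃*,x₁] = x₂*`, `[x₃*,x₂] = -x₁*`. -/
def brT3 : (Fin 8 → ℝ) → (Fin 8 → ℝ) → (Fin 8 → ℝ) := fun x y =>
  ![0, 0, x 0 * y 1 - x 1 * y 0, 0,
    (x 2 * y 3 - x 3 * y 2) - (x 6 * y 1 - x 1 * y 6),
    x 6 * y 0 - x 0 * y 6,
    -(x 0 * y 3 - x 3 * y 0),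
    x 0 * y 2 - x 2 * y 0]

/-- Bracket of `T*_{αθ₁}k`: `[x₁,x₂] = x₃ + αx₃*`, `[x₁,x₃] = -αx₂*`, `[x₂,x₃] = αx₁*`,
`[x₃*,x₁] = x₂*`, `[x₃*,x₂] = -x₁*`. -/
def brTal (α : ℝ) : (Fin 8 → ℝ) → (Fin 8 → ℝ) → (Fin 8 → ℝ) := fun x y =>
  ![0, 0, x 0 * y 1 - x 1 * y 0, 0,
    α * (x 1 * y 2 - x 2 * y 1) - (x 6 * y 1 - x 1 * y 6),
    -(α * (x 0 * y 2 - x 2 * y 0)) + (x 6 * y 0 - x 0 * y 6),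
    α * (x 0 * y 1 - x 1 * y 0), 0]

/-- Bracket of the Kodaira–Thurston algebra `k`: `[x₁, x₂] = x₃`. -/
def brK : (Fin 4 → ℝ) → (Fin 4 → ℝ) → (Fin 4 → ℝ) := fun x y =>
  ![0, 0, x 0 * y 1 - x 1 * y 0, 0]

/-- The abelian complex structure of the Kodaira–Thurston algebra:
`Jx₁ = x₂`, `Jx₂ = -x₁`, `Jx₃ = x₄`, `Jx₄ = -x₃`. -/
def jK : (Fin 4 → ℝ) → (Fin 4 → ℝ) := fun x => ![-x 1, x 0, -x 3, x 2]

/-- The dual basis vectors `xᵢ*` of `k*`. -/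
noncomputable def p4 (i : Fin 4) : Module.Dual ℝ (Fin 4 → ℝ) := LinearMap.proj i

/-- The cyclic cocycle `θ₁`. -/
noncomputable def th1 : (Fin 4 → ℝ) → (Fin 4 → ℝ) → Module.Dual ℝ (Fin 4 → ℝ) := fun x y =>
  (x 0 * y 1 - x 1 * y 0) • p4 2 - (x 0 * y 2 - x 2 * y 0) • p4 1
    + (x 1 * y 2 - x 2 * y 1) • p4 0

/-- The cyclic cocycle `θ₂`. -/
noncomputable def th2 : (Fin 4 → ℝ) → (Fin 4 → ℝ) → Module.Dual ℝ (Fin 4 → ℝ) := fun x y =>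
  (x 0 * y 1 - x 1 * y 0) • p4 3 - (x 0 * y 3 - x 3 * y 0) • p4 1
    + (x 1 * y 3 - x 3 * y 1) • p4 0

/-- The cyclic cocycle `θ₃`. -/
noncomputable def th3 : (Fin 4 → ℝ) → (Fin 4 → ℝ) → Module.Dual ℝ (Fin 4 → ℝ) := fun x y =>
  (x 0 * y 2 - x 2 * y 0) • p4 3 - (x 0 * y 3 - x 3 * y 0) • p4 2
    + (x 2 * y 3 - x 3 * y 2) • p4 0

/-- The cyclic cocycle `θ₄`. -/
noncomputable def th4 : (Fin 4 → ℝ) → (Fin 4 → ℝ) → Module.Dual ℝ (Fin 4 → ℝ) := fun x y =>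
  (x 1 * y 2 - x 2 * y 1) • p4 3 - (x 1 * y 3 - x 3 * y 1) • p4 2
    + (x 2 * y 3 - x 3 * y 2) • p4 1

/-- if a pHQ-double extension is nilpotent then the defining
derivations `D`, `F` are nilpotent endomorphisms and the base algebra is a
nilpotent Lie algebra. -/
theorem stmt_10 {V : Type*} [AddCommGroup V] [Module ℝ V]
    (br₀ : V → V → V) (J₀ : V → V) (φ₀ : V → V → ℝ)
    (h₀ : IsPHQ V br₀ J₀ φ₀)
    (D F : V → V) (s₀ : V)
    (hdata : IsPHQDblExtData V br₀ J₀ φ₀ D F s₀)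
    (hnilp : ∃ k, lcsW (extBr br₀ φ₀ D F s₀) ⊤ k = ⊥) :
    (∃ k, ∀ x : V, D^[k] x = 0) ∧ (∃ k, ∀ x : V, F^[k] x = 0) ∧
    (∃ k, lcsW br₀ ⊤ k = ⊥) := by
  obtain ⟨hDadd, hDsmul, hFadd, hFsmul, _, _, _, _, _, _⟩ := hdata
  -- basic vanishing facts
  have hD0 : D 0 = 0 := by simpa using hDsmul 0 0
  have hF0 : F 0 = 0 := by simpa using hFsmul 0 0
  have hbr0l : ∀ y, br₀ 0 y = 0 := fun y => by simpa using h₀.br_smul_left 0 0 y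
  have hbr0r : ∀ y, br₀ y 0 = 0 := fun y => by
    rw [h₀.br_skew, hbr0l, neg_zero]
  have hφ0l : ∀ y, φ₀ 0 y = 0 := fun y => by simpa using h₀.phi_smul_left 0 0 y
  have hφ0r : ∀ y, φ₀ y 0 = 0 := fun y => by rw [h₀.phi_symm, hφ0l]
  have hφradd : ∀ x y z, φ₀ x (y + z) = φ₀ x y + φ₀ x z := fun x y z => by
    rw [h₀.phi_symm, h₀.phi_add_left, h₀.phi_symm x y, h₀.phi_symm x z]
  have hφrsmul : ∀ (c : ℝ) x y, φ₀ x (c • y) = c * φ₀ x y := fun c x y => by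
    rw [h₀.phi_symm, h₀.phi_smul_left, h₀.phi_symm]
  set B := extBr br₀ φ₀ D F s₀ with hB
  -- additivity and homogeneity of the extension bracket in the first argument
  have hadd : ∀ P P' Q : ℝ × ℝ × V × ℝ × ℝ, B (P + P') Q = B P Q + B P' Q := by
    rintro ⟨a, b, x, c, d⟩ ⟨a', b', x', c', d'⟩ ⟨qa, qb, qx, qc, qd⟩
    simp only [hB, extBr, Prod.mk_add_mk, Prod.mk.injEq, hFadd, hDadd,
      h₀.br_add_left, h₀.phi_add_left, hφradd]
    refine ⟨by ring, by ring, ?_, by ring, by ring⟩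
    module
  have hsmul : ∀ (t : ℝ) (P Q : ℝ × ℝ × V × ℝ × ℝ), B (t • P) Q = t • B P Q := by
    rintro t ⟨a, b, x, c, d⟩ ⟨qa, qb, qx, qc, qd⟩
    simp only [hB, extBr, Prod.smul_mk, smul_eq_mul, Prod.mk.injEq, hFsmul, hDsmul,
      h₀.br_smul_left, h₀.phi_smul_left, hφrsmul]
    refine ⟨by ring, by ring, ?_, by ring, by ring⟩
    module
  -- the central subspace spanned by z and z'
  set Z : Submodule ℝ (ℝ × ℝ × V × ℝ × ℝ) :=
    Submodule.span ℝ ({((1:ℝ), (0:ℝ), (0:V), (0:ℝ), (0:ℝ)),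
      ((0:ℝ), (1:ℝ), (0:V), (0:ℝ), (0:ℝ))} : Set (ℝ × ℝ × V × ℝ × ℝ)) with hZ
  have hZmem : ∀ a b : ℝ, ((a, b, (0:V), (0:ℝ), (0:ℝ)) : ℝ × ℝ × V × ℝ × ℝ) ∈ Z := by
    intro a b
    have : ((a, b, (0:V), (0:ℝ), (0:ℝ)) : ℝ × ℝ × V × ℝ × ℝ)
        = a • ((1:ℝ), (0:ℝ), (0:V), (0:ℝ), (0:ℝ)) + b • ((0:ℝ), (1:ℝ), (0:V), (0:ℝ), (0:ℝ)) := by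
      simp [Prod.ext_iff]
    rw [this]
    exact add_mem (Submodule.smul_mem _ _ (Submodule.subset_span (by simp)))
      (Submodule.smul_mem _ _ (Submodule.subset_span (by simp)))
  have hZproj : ∀ w ∈ Z, w.2.2.1 = 0 := by
    intro w hw
    induction hw using Submodule.span_induction with
    | mem x h => rcases h with h | h <;> subst h <;> rfl
    | zero => rfl
    | add x y hx hy ihx ihy => show x.2.2.1 + y.2.2.1 = 0; rw [ihx, ihy, add_zero]
    | smul t x hx ih => show t • x.2.2.1 = 0; rw [ih, smul_zero]
  have hZkill : ∀ w ∈ Z, ∀ Q, B w Q = 0 := by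
    intro w hw
    induction hw using Submodule.span_induction with
    | mem x h =>
        intro Q
        rcases h with h | h <;> subst h <;>
          · obtain ⟨qa, qb, qx, qc, qd⟩ := Q
            simp [hB, extBr, hF0, hD0, hbr0l, hφ0l, hφ0r, Prod.ext_iff]
    | zero =>
        intro Q
        have h := hsmul 0 0 Q
        simpa using h
    | add x y hx hy ihx ihy => intro Q; rw [hadd, ihx, ihy, add_zero]
    | smul t x hx ih => intro Q; rw [hsmul, ih, smul_zero]
  set C : ℕ → Submodule ℝ (ℝ × ℝ × V × ℝ × ℝ) := lcsW B ⊤ with hC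
  have hCsucc : ∀ n, C (n + 1)
      = Submodule.span ℝ {w | ∃ x ∈ C n, ∃ y ∈ (⊤ : Submodule ℝ (ℝ × ℝ × V × ℝ × ℝ)), w = B x y} :=
    fun n => rfl
  -- the inclusion of V
  have hι_add : ∀ x y : V, ((0:ℝ), (0:ℝ), x + y, (0:ℝ), (0:ℝ))
      = ((0:ℝ), (0:ℝ), x, (0:ℝ), (0:ℝ)) + (((0:ℝ), (0:ℝ), y, (0:ℝ), (0:ℝ)) : ℝ × ℝ × V × ℝ × ℝ) := by
    intro x y; simp [Prod.ext_iff]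
  have hι_smul : ∀ (t : ℝ) (x : V), ((0:ℝ), (0:ℝ), t • x, (0:ℝ), (0:ℝ))
      = t • (((0:ℝ), (0:ℝ), x, (0:ℝ), (0:ℝ)) : ℝ × ℝ × V × ℝ × ℝ) := by
    intro t x; simp [Prod.ext_iff]
  -- key step: bracketing a (C n ⊔ Z)-element of V-type with anything lands in C (n+1)
  have step : ∀ n (y : V), ((0:ℝ), (0:ℝ), y, (0:ℝ), (0:ℝ)) ∈ C n ⊔ Z →
      ∀ Q : ℝ × ℝ × V × ℝ × ℝ, B ((0:ℝ), (0:ℝ), y, (0:ℝ), (0:ℝ)) Q ∈ C (n + 1) := by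
    intro n y hy Q
    obtain ⟨c, hc, w, hw, hcw⟩ := Submodule.mem_sup.mp hy
    have : B ((0:ℝ), (0:ℝ), y, (0:ℝ), (0:ℝ)) Q = B c Q := by
      rw [← hcw] at *
      rw [hadd, hZkill w hw Q, add_zero]
    rw [this, hCsucc]
    exact Submodule.subset_span ⟨c, hc, Q, trivial, rfl⟩
  -- computations of the three relevant brackets
  have hbrD : ∀ y : V, B ((0:ℝ), (0:ℝ), y, (0:ℝ), (0:ℝ)) ((0:ℝ), (0:ℝ), (0:V), (1:ℝ), (0:ℝ))
      = (-(φ₀ s₀ y), (0:ℝ), -(D y), (0:ℝ), (0:ℝ)) := by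
    intro y; simp [hB, extBr, hF0, hD0, hbr0r, hφ0r, Prod.ext_iff]
  have hbrF : ∀ y : V, B ((0:ℝ), (0:ℝ), y, (0:ℝ), (0:ℝ)) ((0:ℝ), (0:ℝ), (0:V), (0:ℝ), (1:ℝ))
      = ((0:ℝ), φ₀ s₀ y, -(F y), (0:ℝ), (0:ℝ)) := by
    intro y; simp [hB, extBr, hF0, hD0, hbr0r, hφ0r, Prod.ext_iff]
  have hbrV : ∀ x y : V, B ((0:ℝ), (0:ℝ), x, (0:ℝ), (0:ℝ)) ((0:ℝ), (0:ℝ), y, (0:ℝ), (0:ℝ))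
      = (φ₀ (F x) y, φ₀ (D x) y, br₀ x y, (0:ℝ), (0:ℝ)) := by
    intro x y; simp [hB, extBr, hφ0r, Prod.ext_iff]
  -- reconstruction lemma: the V-part of an element of C(n+1) ⊔ Z
  have recon : ∀ (n : ℕ) (E : ℝ × ℝ × V × ℝ × ℝ) (u : V), E ∈ C (n + 1) → E.2.2.1 = -u →
      E.2.2.2.1 = 0 → E.2.2.2.2 = 0 →
      ((0:ℝ), (0:ℝ), u, (0:ℝ), (0:ℝ)) ∈ C (n + 1) ⊔ Z := by
    intro n E u hE h1 h2 h3
    obtain ⟨ea, eb, ex, ec, ed⟩ := E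
    simp only at h1 h2 h3
    subst h1; subst h2; subst h3
    have heq : ((0:ℝ), (0:ℝ), u, (0:ℝ), (0:ℝ))
        = (-1 : ℝ) • ((ea, eb, -u, (0:ℝ), (0:ℝ)) : ℝ × ℝ × V × ℝ × ℝ)
          + ((ea, eb, (0:V), (0:ℝ), (0:ℝ)) : ℝ × ℝ × V × ℝ × ℝ) := by
      simp [Prod.ext_iff]
    rw [heq]
    exact add_mem (Submodule.mem_sup_left (Submodule.smul_mem _ _ hE))
      (Submodule.mem_sup_right (hZmem _ _))
  -- claim for D
  have claimD : ∀ n (x : V), ((0:ℝ), (0:ℝ), D^[n] x, (0:ℝ), (0:ℝ)) ∈ C n ⊔ Z := by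
    intro n
    induction n with
    | zero => intro x; exact Submodule.mem_sup_left Submodule.mem_top
    | succ n ih =>
        intro x
        rw [Function.iterate_succ_apply']
        set y := D^[n] x with hy
        have hE := step n y (ih x) ((0:ℝ), (0:ℝ), (0:V), (1:ℝ), (0:ℝ))
        rw [hbrD y] at hE
        exact recon n _ (D y) hE rfl rfl rfl
  have claimF : ∀ n (x : V), ((0:ℝ), (0:ℝ), F^[n] x, (0:ℝ), (0:ℝ)) ∈ C n ⊔ Z := by
    intro n
    induction n with
    | zero => intro x; exact Submodule.mem_sup_left Submodule.mem_top
    | succ n ih =>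
        intro x
        rw [Function.iterate_succ_apply']
        set y := F^[n] x with hy
        have hE := step n y (ih x) ((0:ℝ), (0:ℝ), (0:V), (0:ℝ), (1:ℝ))
        rw [hbrF y] at hE
        exact recon n _ (F y) hE rfl rfl rfl
  -- claim for the lower central series of g₀
  have claimL : ∀ n, ∀ x ∈ lcsW br₀ (⊤ : Submodule ℝ V) n,
      ((0:ℝ), (0:ℝ), x, (0:ℝ), (0:ℝ)) ∈ C n ⊔ Z := by
    intro n
    induction n with
    | zero => intro x _; exact Submodule.mem_sup_left Submodule.mem_top
    | succ n ih =>
        intro x hx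
        have hx' : x ∈ Submodule.span ℝ
            {w : V | ∃ a ∈ lcsW br₀ (⊤ : Submodule ℝ V) n, ∃ b ∈ (⊤ : Submodule ℝ V), w = br₀ a b} :=
          hx
        clear hx
        induction hx' using Submodule.span_induction with
        | mem w h =>
            obtain ⟨a, ha, b, -, rfl⟩ := h
            have hE := step n a (ih a ha) ((0:ℝ), (0:ℝ), b, (0:ℝ), (0:ℝ))
            rw [hbrV a b] at hE
            have heq : ((0:ℝ), (0:ℝ), br₀ a b, (0:ℝ), (0:ℝ))
                = ((φ₀ (F a) b, φ₀ (D a) b, br₀ a b, (0:ℝ), (0:ℝ)) : ℝ × ℝ × V × ℝ × ℝ)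
                  + ((-(φ₀ (F a) b), -(φ₀ (D a) b), (0:V), (0:ℝ), (0:ℝ)) : ℝ × ℝ × V × ℝ × ℝ) := by
              simp [Prod.ext_iff]
            rw [heq]
            exact add_mem (Submodule.mem_sup_left hE) (Submodule.mem_sup_right (hZmem _ _))
        | zero =>
            have : ((0:ℝ), (0:ℝ), (0:V), (0:ℝ), (0:ℝ)) = (0 : ℝ × ℝ × V × ℝ × ℝ) := rfl
            rw [this]; exact zero_mem _
        | add a b ha hb iha ihb => rw [hι_add]; exact add_mem iha ihb
        | smul t a ha iha => rw [hι_smul]; exact Submodule.smul_mem _ _ iha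
  -- conclude
  obtain ⟨k, hk⟩ := hnilp
  have hCk : C k = ⊥ := hk
  have hsup : C k ⊔ Z = Z := by rw [hCk, bot_sup_eq]
  have key : ∀ x : V, ((0:ℝ), (0:ℝ), x, (0:ℝ), (0:ℝ)) ∈ C k ⊔ Z → x = 0 := by
    intro x hx
    rw [hsup] at hx
    exact hZproj _ hx
  refine ⟨⟨k, fun x => key _ (claimD k x)⟩, ⟨k, fun x => key _ (claimF k x)⟩, ⟨k, ?_⟩⟩
  rw [eq_bot_iff]
  intro x hx
  exact (Submodule.mem_bot ℝ).mpr (key x (claimL k x hx))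
end

section
/- Let (g, J, φ) be the pHQ-double extension of the 4-dimensional abelian pseudo-Hermitian Lie algebra ℝ^{2,2} (neutral metric of signature (2,2)) by means of D = F = 0 and some s₀ ∈ ℝ⁴. Then (g, J, φ) is equivalent to exactly one of: the 8-dimensional abelian pseudo-Hermitian Lie algebra ℝ^{4,4} (when s₀ = 0), the Lie algebra T*₀k (when s₀ ≠ 0 is isotropic), or one of T*_{θ₁}k, T*_{−θ₁}k (when φ(s₀,s₀) ≠ 0, the sign being the sign of φ(s₀,s₀)). -/
open TensorProduct

/-!
With `br₀ = 0` and `D = F = 0` the only brackets of the double extension are `[v, v'] = s₀`,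
`[v, x] = -φ₀(s₀, x) z'` and `[v', x] = φ₀(s₀, x) z`, so the extension is governed by the
position of `s₀` in `(ℝ^{2,2}, J₀, φ₀)`. If `s₀ = 0` it is abelian, and a `J₀`-adapted
orthonormal basis `p, J₀p, n, J₀n` of signature `(+,+,-,-)` identifies it with `ℝ^{4,4}`.
Otherwise we find a `J₀`-adapted null frame `p, J₀p, q, J₀q` (`φ₀(p, q) = 1`, all other
pairings zero) with `s₀ = c (p + α q)`, `c > 0`: for isotropic `s₀` take `p = s₀` and `α = 0`,
otherwise any `α` with `α φ₀(s₀, s₀) > 0` will do. In the basis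
`v / √c, v' / √c, p, J₀p, √c z, √c z', q, J₀q` the structure constants are those of `T*_{αθ₁}k`.

The four algebras are pairwise inequivalent: `ℝ^{4,4}` is the only abelian one, and on
`T*_{αθ₁}k` the invariant `φ([x, y], [x, y]) = 2α (x₁y₂ - x₂y₁)²` takes values of the sign
of `α` only, and the value `2α` at `(x₁, x₂)`.
-/

namespace IsPHQ

variable {V : Type*} [AddCommGroup V] [Module ℝ V] {br : V → V → V} {J : V → V}
  {φ : V → V → ℝ}

theorem phi_add_right (h : IsPHQ V br J φ) (x y z : V) : φ x (y + z) = φ x y + φ x z := by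
  rw [h.phi_symm, h.phi_add_left, h.phi_symm y, h.phi_symm z]

theorem phi_smul_right (h : IsPHQ V br J φ) (c : ℝ) (x y : V) : φ x (c • y) = c * φ x y := by
  rw [h.phi_symm, h.phi_smul_left, h.phi_symm y]

theorem phi_neg_right (h : IsPHQ V br J φ) (x y : V) : φ x (-y) = -φ x y := by
  rw [← neg_one_smul ℝ y, h.phi_smul_right, neg_one_mul]

theorem phi_zero_left (h : IsPHQ V br J φ) (y : V) : φ 0 y = 0 := by
  simpa using h.phi_smul_left 0 0 y

theorem phi_J_left (h : IsPHQ V br J φ) (x y : V) : φ (J x) y = -φ x (J y) := by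
  rw [← h.phi_hermitian (J x) y, h.J_sq, ← neg_one_smul ℝ x, h.phi_smul_left, neg_one_mul]

theorem phi_J_right (h : IsPHQ V br J φ) (x y : V) : φ x (J y) = -φ (J x) y := by
  rw [h.phi_J_left, neg_neg]

theorem phi_self_J (h : IsPHQ V br J φ) (x : V) : φ x (J x) = 0 := by
  linarith [h.phi_J_left x x, h.phi_symm x (J x)]

theorem phi_J_self (h : IsPHQ V br J φ) (x : V) : φ (J x) x = 0 := by
  rw [h.phi_symm]; exact h.phi_self_J x

theorem exists_pos_smul_phi_self_eq (h : IsPHQ V br J φ) {x : V} {c : ℝ}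
    (hxc : 0 < φ x x * c) : ∃ r : ℝ, 0 < r ∧ φ (r • x) (r • x) = c := by
  have hx : φ x x ≠ 0 := by rintro hx; simp [hx] at hxc
  have hquot : 0 < c / φ x x := by
    rw [show c / φ x x = φ x x * c / φ x x ^ 2 by field_simp]
    positivity
  refine ⟨√(c / φ x x), Real.sqrt_pos.mpr hquot, ?_⟩
  rw [h.phi_smul_left, h.phi_smul_right, ← mul_assoc, Real.mul_self_sqrt hquot.le,
    div_mul_cancel₀ _ hx]

/-- Project `n` orthogonally off the `J`-stable plane spanned by `t` and `J t`. -/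
theorem exists_orthogonal_projection (h : IsPHQ V br J φ) {t : V} (ht : φ t t ≠ 0)
    (n : V) :
    ∃ w : V, φ t w = 0 ∧ φ (J t) w = 0 ∧
      φ t t * φ w w = φ t t * φ n n - (φ t n ^ 2 + φ (J t) n ^ 2) := by
  refine ⟨n - (φ t n / φ t t) • t - (φ (J t) n / φ t t) • J t, ?_, ?_, ?_⟩
  all_goals
    simp only [sub_eq_add_neg, ← neg_smul, h.phi_add_left, h.phi_add_right, h.phi_smul_left,
      h.phi_smul_right, h.phi_self_J, h.phi_J_self, h.phi_hermitian, h.phi_symm n]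
    field_simp
    ring

theorem exists_orthogonal_phi_self_eq (h : IsPHQ V br J φ) {t n : V} {c : ℝ}
    (hn : φ t t * φ n n < 0) (hc : φ t t * c < 0) :
    ∃ w : V, φ t w = 0 ∧ φ (J t) w = 0 ∧ φ w w = c := by
  have ht : φ t t ≠ 0 := by rintro ht; simp [ht] at hn
  obtain ⟨w₀, htw₀, hJtw₀, hw₀⟩ := h.exists_orthogonal_projection ht n
  have hw₀neg : φ t t * φ w₀ w₀ < 0 := by
    nlinarith [sq_nonneg (φ t n), sq_nonneg (φ (J t) n)]
  have hw₀c : 0 < φ w₀ w₀ * c := by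
    have := mul_pos_of_neg_of_neg hw₀neg hc
    exact pos_of_mul_pos_right (a := φ t t ^ 2) (by linarith) (sq_nonneg _)
  obtain ⟨r, -, hr⟩ := h.exists_pos_smul_phi_self_eq hw₀c
  exact ⟨r • w₀, by rw [h.phi_smul_right, htw₀, mul_zero],
    by rw [h.phi_smul_right, hJtw₀, mul_zero], hr⟩

theorem exists_phi_eq_one_of_ne_zero (h : IsPHQ V br J φ) {s : V} (hs : s ≠ 0) :
    ∃ u : V, φ s u = 1 ∧ φ (J s) u = 0 := by
  obtain ⟨y, hy⟩ : ∃ y, φ s y ≠ 0 := by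
    by_contra! hy
    exact hs (h.phi_nondeg s hy)
  have hAB : φ s y ^ 2 + φ s (J y) ^ 2 ≠ 0 := by positivity
  refine ⟨(φ s y ^ 2 + φ s (J y) ^ 2)⁻¹ • (φ s y • y + φ s (J y) • J y), ?_, ?_⟩
  · simp only [h.phi_add_right, h.phi_smul_right]
    field_simp
  · simp only [h.phi_add_right, h.phi_smul_right, h.phi_J_left s, h.J_sq, h.phi_neg_right]
    ring

theorem exists_isotropic_phi_eq_one (h : IsPHQ V br J φ) {s : V} (hs : s ≠ 0)
    (hss : φ s s = 0) : ∃ u : V, φ s u = 1 ∧ φ (J s) u = 0 ∧ φ u u = 0 := by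
  obtain ⟨u, hsu, hJsu⟩ := h.exists_phi_eq_one_of_ne_zero hs
  refine ⟨u - (φ u u / 2) • s, ?_, ?_, ?_⟩
  all_goals
    simp only [sub_eq_add_neg, ← neg_smul, h.phi_add_left, h.phi_add_right, h.phi_smul_left,
      h.phi_smul_right, h.phi_J_self, h.phi_symm u s, hsu, hJsu, hss]
    ring

end IsPHQ

namespace PHQEquiv

variable {V W : Type*} [AddCommGroup V] [Module ℝ V] [AddCommGroup W] [Module ℝ W]
  {brV : V → V → V} {JV : V → V} {φV : V → V → ℝ}
  {brW : W → W → W} {JW : W → W} {φW : W → W → ℝ}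

/-- An isometry from a nondegenerate form is injective, so in equal finite dimension a linear
isometry intertwining brackets and complex structures is already an equivalence. -/
theorem of_isometry [FiniteDimensional ℝ V] [FiniteDimensional ℝ W] (Θ : W →ₗ[ℝ] V)
    (hdim : Module.finrank ℝ W = Module.finrank ℝ V) (hφW : Function.Injective φW)
    (hbr : ∀ u w, brV (Θ u) (Θ w) = Θ (brW u w)) (hJ : ∀ u, JV (Θ u) = Θ (JW u))
    (hφ : ∀ u w, φV (Θ u) (Θ w) = φW u w) : PHQEquiv brV JV φV brW JW φW := by
  have hinj : Function.Injective Θ := fun u u' huu' =>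
    hφW (funext fun w => by rw [← hφ, huu', hφ])
  let E := LinearMap.linearEquivOfInjective Θ hinj hdim
  have hE : ∀ u, E.symm (Θ u) = u := E.symm_apply_apply
  have hsurj : ∀ x, ∃ u, Θ u = x := fun x => ⟨E.symm x, E.apply_symm_apply x⟩
  refine ⟨E.symm, ?_, ?_, ?_⟩
  · intro x y
    obtain ⟨u, rfl⟩ := hsurj x
    obtain ⟨w, rfl⟩ := hsurj y
    rw [hbr, hE, hE, hE]
  · intro x
    obtain ⟨u, rfl⟩ := hsurj x
    rw [hJ, hE, hE]
  · intro x y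
    obtain ⟨u, rfl⟩ := hsurj x
    obtain ⟨w, rfl⟩ := hsurj y
    rw [hE, hE, hφ]

theorem br_eq_zero (h : PHQEquiv (fun _ _ => (0 : V)) JV φV brW JW φW) (w w' : W) :
    brW w w' = 0 := by
  obtain ⟨ψ, hbr, -, -⟩ := h
  have := hbr (ψ.symm w) (ψ.symm w')
  rwa [map_zero, ψ.apply_symm_apply, ψ.apply_symm_apply, eq_comm] at this

theorem exists_phi_br_self_eq (h : PHQEquiv brV JV φV brW JW φW) (w w' : W) :
    ∃ x y : V, φV (brV x y) (brV x y) = φW (brW w w') (brW w w') := by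
  obtain ⟨ψ, hbr, -, hφ⟩ := h
  refine ⟨ψ.symm w, ψ.symm w', ?_⟩
  rw [← hφ, hbr, ψ.apply_symm_apply, ψ.apply_symm_apply]

end PHQEquiv

theorem phi8_injective : Function.Injective phi8 := by
  intro u u' h
  funext i
  have hi := congrFun h (Pi.single (i + 4) 1)
  fin_cases i <;> simpa [phi8] using hi

theorem phi44_injective : Function.Injective phi44 := by
  intro u u' h
  funext i
  have hi := congrFun h (Pi.single i 1)
  fin_cases i <;> simpa [phi44] using hi

theorem brT0_eq_brTal_zero : brT0 = brTal 0 := by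
  funext x y i
  fin_cases i <;> simp [brT0, brTal]

theorem phi8_brTal_self (α : ℝ) (x y : Fin 8 → ℝ) :
    phi8 (brTal α x y) (brTal α x y) = 2 * α * (x 0 * y 1 - x 1 * y 0) ^ 2 := by
  simp only [phi8, brTal, Matrix.cons_val, Matrix.cons_val_zero, Matrix.cons_val_one]
  ring

theorem brTal_ne_zero (α : ℝ) : brTal α (Pi.single 0 1) (Pi.single 1 1) ≠ 0 := by
  intro h
  simpa [brTal] using congrFun h 2

theorem exists_eq_mul_sq_of_phqEquiv_brTal {α β : ℝ}
    (h : PHQEquiv (brTal α) j8 phi8 (brTal β) j8 phi8) : ∃ c : ℝ, β = α * c ^ 2 := by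
  obtain ⟨x, y, hxy⟩ := h.exists_phi_br_self_eq (Pi.single 0 1) (Pi.single 1 1)
  refine ⟨x 0 * y 1 - x 1 * y 0, ?_⟩
  simp only [phi8_brTal_self, Pi.single_eq_same, Pi.single_eq_of_ne zero_ne_one,
    Pi.single_eq_of_ne one_ne_zero] at hxy
  linarith

section Frames

variable {V : Type*} [AddCommGroup V] [Module ℝ V]

def frameMap (J : V → V) (p q : V) : (Fin 8 → ℝ) →ₗ[ℝ] V :=
  (LinearMap.proj 2).smulRight p + (LinearMap.proj 3).smulRight (J p)
    + (LinearMap.proj 6).smulRight q + (LinearMap.proj 7).smulRight (J q)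

theorem frameMap_apply (J : V → V) (p q : V) (u : Fin 8 → ℝ) :
    frameMap J p q u = u 2 • p + u 3 • J p + u 6 • q + u 7 • J q := rfl

/-- In the basis `x₁, …, x₄*`: `x₁ ↦ v / a`, `x₂ ↦ v' / a`, `x₁* ↦ a z`, `x₂* ↦ a z'`. -/
noncomputable def tStarFrame (J : V → V) (p q : V) (a : ℝ) :
    (Fin 8 → ℝ) →ₗ[ℝ] ℝ × ℝ × V × ℝ × ℝ where
  toFun u := (a * u 4, a * u 5, frameMap J p q u, a⁻¹ * u 1, a⁻¹ * u 0)
  map_add' u w := by simp only [Pi.add_apply, map_add, Prod.mk_add_mk]; ring_nf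
  map_smul' c u := by simp only [Pi.smul_apply, map_smul, smul_eq_mul, Prod.smul_mk,
    RingHom.id_apply]; ring_nf

noncomputable def abelianFrame (J : V → V) (p n : V) :
    (Fin 8 → ℝ) →ₗ[ℝ] ℝ × ℝ × V × ℝ × ℝ where
  toFun u := (u 0 + u 4, u 1 + u 5, frameMap J p n u, (u 1 - u 5) / 2, (u 0 - u 4) / 2)
  map_add' u w := by simp only [Pi.add_apply, map_add, Prod.mk_add_mk]; ring_nf
  map_smul' c u := by simp only [Pi.smul_apply, map_smul, smul_eq_mul, Prod.smul_mk,
    RingHom.id_apply]; ring_nf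

theorem tStarFrame_apply (J : V → V) (p q : V) (a : ℝ) (u : Fin 8 → ℝ) :
    tStarFrame J p q a u = (a * u 4, a * u 5, frameMap J p q u, a⁻¹ * u 1, a⁻¹ * u 0) := rfl

theorem abelianFrame_apply (J : V → V) (p n : V) (u : Fin 8 → ℝ) :
    abelianFrame J p n u =
      (u 0 + u 4, u 1 + u 5, frameMap J p n u, (u 1 - u 5) / 2, (u 0 - u 4) / 2) := rfl

theorem IsPHQ.J_frameMap {br : V → V → V} {J : V → V} {φ : V → V → ℝ}
    (h : IsPHQ V br J φ) (p q : V) (u : Fin 8 → ℝ) :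
    J (frameMap J p q u) = frameMap J p q (j8 u) := by
  simp only [frameMap_apply, h.J_add, h.J_smul, h.J_sq, j8, Matrix.cons_val]
  module

theorem IsPHQ.phi_frameMap {br : V → V → V} {J : V → V} {φ : V → V → ℝ}
    (h : IsPHQ V br J φ) {p q : V} (hpJq : φ p (J q) = 0)
    (u w : Fin 8 → ℝ) :
    φ (frameMap J p q u) (frameMap J p q w) =
      φ p p * (u 2 * w 2 + u 3 * w 3) + φ q q * (u 6 * w 6 + u 7 * w 7)
        + φ p q * (u 2 * w 6 + u 6 * w 2 + u 3 * w 7 + u 7 * w 3) := by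
  have hJpq : φ (J p) q = 0 := by rw [h.phi_J_left, hpJq, neg_zero]
  have hqJp : φ q (J p) = 0 := by rw [h.phi_symm, hJpq]
  have hJqp : φ (J q) p = 0 := by rw [h.phi_symm, hpJq]
  simp only [frameMap_apply, h.phi_add_left, h.phi_add_right, h.phi_smul_left,
    h.phi_smul_right, h.phi_hermitian, h.phi_self_J, h.phi_J_self, hpJq, hJpq, hqJp, hJqp,
    h.phi_symm q p]
  ring

end Frames

theorem extBr_zero_apply {V : Type*} [AddCommGroup V] [Module ℝ V] {φ₀ : V → V → ℝ}
    {s₀ : V} (hφ₀ : ∀ y, φ₀ 0 y = 0) (P Q : ℝ × ℝ × V × ℝ × ℝ) :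
    extBr (fun _ _ => 0) φ₀ (fun _ => 0) (fun _ => 0) s₀ P Q =
      (P.2.2.2.1 * φ₀ s₀ Q.2.2.1 - Q.2.2.2.1 * φ₀ s₀ P.2.2.1,
        Q.2.2.2.2 * φ₀ s₀ P.2.2.1 - P.2.2.2.2 * φ₀ s₀ Q.2.2.1,
        (P.2.2.2.2 * Q.2.2.2.1 - P.2.2.2.1 * Q.2.2.2.2) • s₀, 0, 0) := by
  simp only [extBr, hφ₀, smul_zero, zero_add, sub_self, add_zero, Prod.mk.injEq]
  exact ⟨trivial, by ring, trivial⟩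

theorem exists_phi_self_neg_of_hasSignature {V : Type*} [AddCommGroup V] [Module ℝ V]
    {φ : V → V → ℝ} {a b : ℕ} (h : hasSignature φ a b) (ha : a ≠ 0) : ∃ n : V, φ n n < 0 := by
  obtain ⟨N, -, -, -, -, hN, -, hdimN, -⟩ := h
  obtain ⟨n, hnN, hn⟩ := Submodule.exists_mem_ne_zero_of_ne_bot (p := N) (by
    rintro rfl
    simp only [finrank_bot] at hdimN
    exact ha hdimN.symm)
  exact ⟨n, hN n hnN hn⟩

theorem exists_phi_self_pos_of_hasSignature {V : Type*} [AddCommGroup V] [Module ℝ V]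
    {φ : V → V → ℝ} {a b : ℕ} (h : hasSignature φ a b) (hb : b ≠ 0) : ∃ p : V, 0 < φ p p := by
  obtain ⟨-, P, -, -, -, -, hP, -, hdimP⟩ := h
  obtain ⟨p, hpP, hp⟩ := Submodule.exists_mem_ne_zero_of_ne_bot (p := P) (by
    rintro rfl
    simp only [finrank_bot] at hdimP
    exact hb hdimP.symm)
  exact ⟨p, hP p hpP hp⟩

namespace IsPHQ

variable {V : Type*} [AddCommGroup V] [Module ℝ V] [FiniteDimensional ℝ V] {J₀ : V → V}
  {φ₀ : V → V → ℝ}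

theorem phqEquiv_extBr_brTal_of_frame (h₀ : IsPHQ V (fun _ _ => 0) J₀ φ₀)
    (hV : Module.finrank ℝ V = 4) {p q : V} (hpp : φ₀ p p = 0) (hqq : φ₀ q q = 0)
    (hpq : φ₀ p q = 1) (hpJq : φ₀ p (J₀ q) = 0) {s₀ : V} {α c : ℝ} (hc : 0 < c)
    (hs : s₀ = c • (p + α • q)) :
    PHQEquiv (extBr (fun _ _ => 0) φ₀ (fun _ => 0) (fun _ => 0) s₀) (extJ J₀) (extPhi φ₀)
      (brTal α) j8 phi8 := by
  obtain ⟨a, ha, rfl⟩ : ∃ a : ℝ, a ≠ 0 ∧ c = a ^ 2 :=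
    ⟨√c, (Real.sqrt_pos.mpr hc).ne', (Real.sq_sqrt hc.le).symm⟩
  have hC := h₀.phi_frameMap hpJq
  have hsC : ∀ u, φ₀ s₀ (frameMap J₀ p q u) = a ^ 2 * (u 6 + α * u 2) := by
    intro u
    have : s₀ = frameMap J₀ p q ![0, 0, a ^ 2, 0, 0, 0, a ^ 2 * α, 0] := by
      rw [hs, frameMap_apply]
      simp only [Matrix.cons_val, zero_smul, add_zero]
      module
    rw [this, hC, hpp, hqq, hpq]
    simp only [Matrix.cons_val]
    ring
  refine PHQEquiv.of_isometry (tStarFrame J₀ p q a) (by simp [hV]) phi8_injective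
    (fun u w => ?_) (fun u => ?_) (fun u w => ?_)
  · rw [extBr_zero_apply h₀.phi_zero_left]
    simp only [tStarFrame_apply, hsC]
    ext
    · simp only [brTal, Matrix.cons_val]
      field_simp
      ring
    · simp only [brTal, Matrix.cons_val]
      field_simp
      ring
    · rw [hs, frameMap_apply]
      simp only [brTal, Matrix.cons_val, zero_smul, add_zero, smul_add]
      match_scalars <;> field_simp
    all_goals simp [brTal]
  · simp only [tStarFrame_apply, extJ, h₀.J_frameMap]
    ext <;> simp [j8]
  · simp only [tStarFrame_apply, extPhi, hC, hpp, hqq, hpq, phi8]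
    field_simp
    ring

theorem phqEquiv_extBr_zero_of_frame (h₀ : IsPHQ V (fun _ _ => 0) J₀ φ₀)
    (hV : Module.finrank ℝ V = 4) {p n : V} (hpp : φ₀ p p = 1) (hnn : φ₀ n n = -1)
    (hpn : φ₀ p n = 0) (hpJn : φ₀ p (J₀ n) = 0) :
    PHQEquiv (extBr (fun _ _ => 0) φ₀ (fun _ => 0) (fun _ => 0) 0) (extJ J₀) (extPhi φ₀)
      (fun _ _ => (0 : Fin 8 → ℝ)) j8 phi44 := by
  have hC := h₀.phi_frameMap hpJn
  refine PHQEquiv.of_isometry (abelianFrame J₀ p n) (by simp [hV]) phi44_injective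
    (fun u w => ?_) (fun u => ?_) (fun u w => ?_)
  · simp [extBr_zero_apply h₀.phi_zero_left, h₀.phi_zero_left]
  · simp only [abelianFrame_apply, extJ, h₀.J_frameMap]
    ext <;> simp only [j8, Matrix.cons_val, Matrix.cons_val_zero, Matrix.cons_val_one] <;> ring
  · simp only [abelianFrame_apply, extPhi, hC, hpp, hnn, hpn, phi44]
    ring

theorem phqEquiv_extBr_zero (h₀ : IsPHQ V (fun _ _ => 0) J₀ φ₀)
    (hV : Module.finrank ℝ V = 4) {n p : V} (hn : φ₀ n n < 0) (hp : 0 < φ₀ p p) :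
    PHQEquiv (extBr (fun _ _ => 0) φ₀ (fun _ => 0) (fun _ => 0) 0) (extJ J₀) (extPhi φ₀)
      (fun _ _ => (0 : Fin 8 → ℝ)) j8 phi44 := by
  obtain ⟨r, -, hr⟩ := h₀.exists_pos_smul_phi_self_eq (c := 1) (by rwa [mul_one])
  obtain ⟨w, hpw, hJpw, hww⟩ := h₀.exists_orthogonal_phi_self_eq (t := r • p) (n := n)
    (c := -1) (by rw [hr, one_mul]; exact hn) (by rw [hr]; norm_num)
  exact h₀.phqEquiv_extBr_zero_of_frame hV hr hww hpw (by rw [h₀.phi_J_right, hJpw, neg_zero])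

theorem phqEquiv_extBr_brT0 (h₀ : IsPHQ V (fun _ _ => 0) J₀ φ₀)
    (hV : Module.finrank ℝ V = 4) {s₀ : V} (hs : s₀ ≠ 0) (hss : φ₀ s₀ s₀ = 0) :
    PHQEquiv (extBr (fun _ _ => 0) φ₀ (fun _ => 0) (fun _ => 0) s₀) (extJ J₀) (extPhi φ₀)
      brT0 j8 phi8 := by
  obtain ⟨u, hsu, hJsu, huu⟩ := h₀.exists_isotropic_phi_eq_one hs hss
  rw [brT0_eq_brTal_zero]
  exact h₀.phqEquiv_extBr_brTal_of_frame hV hss huu hsu (by rw [h₀.phi_J_right, hJsu, neg_zero])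
    one_pos (by simp)

/-- Rescale `s₀` to `t` with `φ₀ t t = 2α`, pick `w ⊥ t, J₀ t` with `φ₀ w w = -2α`;
then `(t + w) / 2` and `(t - w) / 2α` form a null pair with `t = p + α q`. -/
theorem phqEquiv_extBr_brTal_of_mul_pos (h₀ : IsPHQ V (fun _ _ => 0) J₀ φ₀)
    (hV : Module.finrank ℝ V = 4) {s₀ n : V} {α : ℝ} (hs : 0 < α * φ₀ s₀ s₀)
    (hn : α * φ₀ n n < 0) :
    PHQEquiv (extBr (fun _ _ => 0) φ₀ (fun _ => 0) (fun _ => 0) s₀) (extJ J₀) (extPhi φ₀)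
      (brTal α) j8 phi8 := by
  have hα : α ≠ 0 := by rintro rfl; simp at hs
  obtain ⟨r, hr, hrs⟩ := h₀.exists_pos_smul_phi_self_eq (x := s₀) (c := 2 * α) (by linarith)
  obtain ⟨w, htw, hJtw, hww⟩ := h₀.exists_orthogonal_phi_self_eq (t := r • s₀) (n := n)
    (c := -(2 * α)) (by rw [hrs]; linarith) (by rw [hrs]; nlinarith [sq_pos_of_ne_zero hα])
  have hst : s₀ = r⁻¹ • (r • s₀) := by rw [smul_smul, inv_mul_cancel₀ hr.ne', one_smul]
  generalize r • s₀ = t at hrs htw hJtw hst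
  have hwt : φ₀ w t = 0 := by rw [h₀.phi_symm, htw]
  have htJw : φ₀ t (J₀ w) = 0 := by rw [h₀.phi_J_right, hJtw, neg_zero]
  have hwJt : φ₀ w (J₀ t) = 0 := by rw [h₀.phi_symm, hJtw]
  refine h₀.phqEquiv_extBr_brTal_of_frame hV (p := (2⁻¹ : ℝ) • (t + w))
    (q := (2 * α)⁻¹ • t + (-(2 * α)⁻¹) • w) ?_ ?_ ?_ ?_ (inv_pos.mpr hr)
    (by rw [hst]; match_scalars <;> field_simp <;> ring)
  all_goals
    simp only [h₀.J_add, h₀.J_smul, h₀.phi_add_left, h₀.phi_add_right, h₀.phi_smul_left,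
      h₀.phi_smul_right, h₀.phi_self_J, htw, hwt, htJw, hwJt, hrs, hww]
  · ring
  · field_simp
    ring
  · field_simp
    ring
  · ring

end IsPHQ

/-- the pHQ-double extension of `ℝ^{2,2}` by `D = F = 0` and `s₀` is
equivalent to exactly one of `ℝ^{4,4}` (when `s₀ = 0`), `T*₀k` (when `s₀ ≠ 0` is
isotropic), `T*_{θ₁}k` or `T*_{-θ₁}k` (according to the sign of `φ₀(s₀,s₀) ≠ 0`). -/
theorem stmt_13
    (J₀ : (Fin 4 → ℝ) → (Fin 4 → ℝ)) (φ₀ : (Fin 4 → ℝ) → (Fin 4 → ℝ) → ℝ)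
    (h₀ : IsPHQ (Fin 4 → ℝ) (fun _ _ => 0) J₀ φ₀)
    (hsig : hasSignature φ₀ 2 2)
    (s₀ : Fin 4 → ℝ) :
    (s₀ = 0 →
      PHQEquiv (extBr (fun _ _ => 0) φ₀ (fun _ => 0) (fun _ => 0) s₀) (extJ J₀) (extPhi φ₀)
        (fun _ _ => (0 : Fin 8 → ℝ)) j8 phi44) ∧
    (s₀ ≠ 0 → φ₀ s₀ s₀ = 0 →
      PHQEquiv (extBr (fun _ _ => 0) φ₀ (fun _ => 0) (fun _ => 0) s₀) (extJ J₀) (extPhi φ₀)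
        brT0 j8 phi8) ∧
    (0 < φ₀ s₀ s₀ →
      PHQEquiv (extBr (fun _ _ => 0) φ₀ (fun _ => 0) (fun _ => 0) s₀) (extJ J₀) (extPhi φ₀)
        (brTal 1) j8 phi8) ∧
    (φ₀ s₀ s₀ < 0 →
      PHQEquiv (extBr (fun _ _ => 0) φ₀ (fun _ => 0) (fun _ => 0) s₀) (extJ J₀) (extPhi φ₀)
        (brTal (-1)) j8 phi8) ∧
    ¬ PHQEquiv (fun _ _ => (0 : Fin 8 → ℝ)) j8 phi44 brT0 j8 phi8 ∧
    ¬ PHQEquiv (fun _ _ => (0 : Fin 8 → ℝ)) j8 phi44 (brTal 1) j8 phi8 ∧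
    ¬ PHQEquiv (fun _ _ => (0 : Fin 8 → ℝ)) j8 phi44 (brTal (-1)) j8 phi8 ∧
    ¬ PHQEquiv brT0 j8 phi8 (brTal 1) j8 phi8 ∧
    ¬ PHQEquiv brT0 j8 phi8 (brTal (-1)) j8 phi8 ∧
    ¬ PHQEquiv (brTal 1) j8 phi8 (brTal (-1)) j8 phi8 := by
  have hV : Module.finrank ℝ (Fin 4 → ℝ) = 4 := by simp
  obtain ⟨n, hn⟩ := exists_phi_self_neg_of_hasSignature hsig two_ne_zero
  obtain ⟨p, hp⟩ := exists_phi_self_pos_of_hasSignature hsig two_ne_zero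
  have not_abelian (α : ℝ) : ¬ PHQEquiv (fun _ _ => (0 : Fin 8 → ℝ)) j8 phi44 (brTal α) j8 phi8 :=
    fun h => brTal_ne_zero α (h.br_eq_zero _ _)
  have not_rescaled {α β : ℝ} (hαβ : ∀ c : ℝ, β ≠ α * c ^ 2) :
      ¬ PHQEquiv (brTal α) j8 phi8 (brTal β) j8 phi8 := fun h =>
    let ⟨c, hc⟩ := exists_eq_mul_sq_of_phqEquiv_brTal h
    hαβ c hc
  refine ⟨?_, h₀.phqEquiv_extBr_brT0 hV,
    fun hs => h₀.phqEquiv_extBr_brTal_of_mul_pos hV (by rwa [one_mul]) (by rwa [one_mul]),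
    fun hs => h₀.phqEquiv_extBr_brTal_of_mul_pos hV (by linarith) (n := p) (by linarith),
    brT0_eq_brTal_zero ▸ not_abelian 0, not_abelian 1, not_abelian (-1),
    brT0_eq_brTal_zero ▸ not_rescaled (by simp), brT0_eq_brTal_zero ▸ not_rescaled (by simp),
    not_rescaled fun c => by nlinarith [sq_nonneg c]⟩
  rintro rfl
  exact h₀.phqEquiv_extBr_zero hV hn hp
end

section
/- Consider ℝ⁴ with a linear map J satisfying J² = −id and a nondegenerate symmetric bilinear form φ of neutral signature (2,2) with φ(Jx,Jy) = φ(x,y). Let F, D be nilpotent φ-skewsymmetric linear endomorphisms of ℝ⁴ with F ≠ 0, F∘D = D∘F, and (F + J∘D)∘J = J∘(F + J∘D). Then Ker(F) = J(Ker(F)) = Im(F); in particular Ker(F) is a 2-dimensional J-invariant totally isotropic subspace. -/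
open TensorProduct

/-!
The hypothesis `[F + JD, J] = 0` says that the commutator `B = JF - FJ` equals `D + JDJ`.
Since `F` and `D` commute, cyclicity of the trace gives `tr(B²) = 0`. Now `B` is `φ`-skew and
anticommutes with `J`, so `φ(Bx, y) = 0` whenever `x, y` lie in the same one of the planes
`⟨u, Ju⟩`, `⟨w, Jw⟩` of an orthogonal frame with `φ(u, u) > 0 > φ(w, w)` (such a frame exists
by neutrality). In this frame `-tr(B²)` is a sum of squares `φ(Beᵢ, eⱼ)²` with positive weights,
hence `B = 0`, i.e. `F` commutes with `J`. Then `Ker F ⊓ Im F` is `J`-invariant, hence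
even-dimensional, and nonzero because `F` is nilpotent; in dimension 4 this forces
`Ker F = Im F` of dimension 2, and `Ker F` is isotropic because `F` is skew.
-/

open Module LinearMap

section ComplexStructure

variable {V : Type*} [AddCommGroup V] [Module ℝ V]

theorem even_finrank_of_mul_self_eq_neg_one [FiniteDimensional ℝ V] {J : End ℝ V}
    (hJ : J * J = -1) : Even (finrank ℝ V) := by
  by_contra hodd
  have hdet : LinearMap.det J * LinearMap.det J = -1 := by
    rw [← map_mul, hJ, ← neg_one_smul ℝ (1 : End ℝ V), LinearMap.det_smul, map_one, mul_one,
      (Nat.not_even_iff_odd.1 hodd).neg_one_pow]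
  nlinarith [mul_self_nonneg (LinearMap.det J)]

theorem Submodule.even_finrank_of_mapsTo [FiniteDimensional ℝ V] {J : End ℝ V}
    (hJ : J * J = -1) (W : Submodule ℝ V) (hW : ∀ x ∈ W, J x ∈ W) : Even (finrank ℝ W) :=
  even_finrank_of_mul_self_eq_neg_one (J := J.restrict hW) <| by
    ext x
    simpa using congr($hJ (x : V))

end ComplexStructure

theorem Submodule.map_eq_self_of_mapsTo {R M : Type*} [Ring R] [AddCommGroup M] [Module R M]
    {J : End R M} (hJ : J * J = -1) {W : Submodule R M} (hW : ∀ x ∈ W, J x ∈ W) :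
    W.map J = W := by
  refine le_antisymm (Submodule.map_le_iff_le_comap.2 hW) fun x hx =>
    ⟨-J x, W.neg_mem (hW x hx), ?_⟩
  rw [map_neg, ← Module.End.mul_apply, hJ]
  simp

theorem Module.End.ker_inf_range_ne_bot_of_isNilpotent {R M : Type*} [Ring R] [AddCommGroup M]
    [Module R M] {F : End R M} (hF : IsNilpotent F) (hF0 : F ≠ 0) : ker F ⊓ range F ≠ ⊥ := by
  have : Nontrivial (End R M) := nontrivial_of_ne F 0 hF0
  obtain ⟨k, hk⟩ : ∃ k, nilpotencyClass F = k + 2 := by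
    have h1 := pos_nilpotencyClass_iff.2 hF
    have h2 : nilpotencyClass F ≠ 1 := mt nilpotencyClass_eq_one.1 hF0
    exact ⟨nilpotencyClass F - 2, by omega⟩
  obtain ⟨hzero, hne⟩ := nilpotencyClass_eq_succ_iff.1 hk
  obtain ⟨x, hx⟩ : ∃ x, (F ^ (k + 1)) x ≠ 0 := by
    by_contra! h
    exact hne (LinearMap.ext h)
  refine (Submodule.ne_bot_iff _).2 ⟨(F ^ (k + 1)) x, ⟨?_, (F ^ k) x, ?_⟩, hx⟩
  · rw [SetLike.mem_coe, mem_ker, ← Module.End.mul_apply, ← pow_succ', hzero,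
      LinearMap.zero_apply]
  · rw [pow_succ', Module.End.mul_apply]

theorem range_eq_ker_and_finrank_eq_two_of_commute {V : Type*} [AddCommGroup V] [Module ℝ V]
    [FiniteDimensional ℝ V] (hV : finrank ℝ V = 4) {J F : End ℝ V} (hJ : J * J = -1)
    (hJF : Commute J F) (hF : IsNilpotent F) (hF0 : F ≠ 0) :
    range F = ker F ∧ finrank ℝ (ker F) = 2 := by
  set K := ker F ⊓ range F
  have hK : ∀ x ∈ K, J x ∈ K := by
    rintro x ⟨hker, y, rfl⟩
    refine ⟨?_, J y, ?_⟩
    · rw [SetLike.mem_coe, mem_ker, ← Module.End.mul_apply, ← hJF.eq, Module.End.mul_apply,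
        mem_ker.1 hker, map_zero]
    · rw [← Module.End.mul_apply, ← hJF.eq, Module.End.mul_apply]
  have hK0 : finrank ℝ K ≠ 0 := fun h => Module.End.ker_inf_range_ne_bot_of_isNilpotent hF hF0
    (Submodule.finrank_eq_zero.1 h)
  obtain ⟨m, hm⟩ := Submodule.even_finrank_of_mapsTo hJ K hK
  have hKker : finrank ℝ K ≤ finrank ℝ (ker F) := Submodule.finrank_mono inf_le_left
  have hKrange : finrank ℝ K ≤ finrank ℝ (range F) := Submodule.finrank_mono inf_le_right
  have hrank := finrank_range_add_finrank_ker F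
  have hKker' : K = ker F := Submodule.eq_of_le_of_finrank_eq inf_le_left (by omega)
  have hKrange' : K = range F := Submodule.eq_of_le_of_finrank_eq inf_le_right (by omega)
  exact ⟨hKrange'.symm.trans hKker', by omega⟩

theorem commutator_mul_eq_neg_mul {R : Type*} [Ring R] {J : R} (hJ : J * J = -1) (F : R) :
    (J * F - F * J) * J = -(J * (J * F - F * J)) := by
  have hFJJ : F * J * J = -F := by rw [mul_assoc, hJ, mul_neg_one]
  have hJJF : J * (J * F) = -F := by rw [← mul_assoc, hJ, neg_one_mul]
  rw [sub_mul, mul_sub, hFJJ, hJJF]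
  noncomm_ring

theorem trace_commutator_mul_self_eq_zero {R M : Type*} [CommRing R] [AddCommGroup M]
    [Module R M] {J D F : End R M} (hJ : J * J = -1) (hFD : Commute F D)
    (hcond : J * F - F * J = D + J * D * J) :
    trace R M ((J * F - F * J) * (J * F - F * J)) = 0 := by
  have hBJ : (J * F - F * J) * J = D * J - J * D := by
    rw [hcond, add_mul, mul_assoc (J * D), hJ]
    noncomm_ring
  have hJB : J * (J * F - F * J) = -(D * J - J * D) := by
    rw [← hBJ, commutator_mul_eq_neg_mul hJ, neg_neg]
  have hDJF : trace R M (J * D * F) = trace R M (D * J * F) := by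
    rw [mul_assoc, ← hFD.eq, ← mul_assoc, trace_mul_cycle]
  calc trace R M ((J * F - F * J) * (J * F - F * J))
      = trace R M ((J * F - F * J) * J * F) - trace R M (J * (J * F - F * J) * F) := by
        rw [mul_sub (J * F - F * J), map_sub, ← mul_assoc, trace_mul_cycle', ← mul_assoc]
    _ = 2 * (trace R M (D * J * F) - trace R M (J * D * F)) := by
        rw [hBJ, hJB, neg_mul, map_neg, sub_mul, map_sub]
        ring
    _ = 0 := by rw [hDJF, sub_self, mul_zero]

namespace LinearMap.BilinForm

section OrthogonalBasis

variable {K V ι : Type*} [Field K] [AddCommGroup V] [Module K V] [Fintype ι]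
  {b : LinearMap.BilinForm K V} {e : Basis ι K V}

theorem repr_eq_div_of_iIsOrtho (he : b.iIsOrtho e) (hne : ∀ i, b (e i) (e i) ≠ 0) (v : V)
    (i : ι) : e.repr v i = b v (e i) / b (e i) (e i) := by
  rw [eq_div_iff (hne i)]
  conv_rhs => rw [← e.sum_repr v]
  rw [sum_left, Finset.sum_eq_single i (fun j _ hji => by rw [smul_left, he hji, mul_zero])
    (by simp), smul_left]

theorem trace_eq_sum_div_of_iIsOrtho [DecidableEq ι] (he : b.iIsOrtho e)
    (hne : ∀ i, b (e i) (e i) ≠ 0) (X : End K V) :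
    trace K V X = ∑ i, b (X (e i)) (e i) / b (e i) (e i) := by
  simp [trace_eq_matrix_trace K e, Matrix.trace, LinearMap.toMatrix_apply,
    repr_eq_div_of_iIsOrtho he hne]

theorem apply_eq_sum_div_of_iIsOrtho (he : b.iIsOrtho e) (hne : ∀ i, b (e i) (e i) ≠ 0)
    (x y : V) : b x y = ∑ i, b x (e i) * b (e i) y / b (e i) (e i) := by
  conv_lhs => rw [← e.sum_repr x]
  simp only [sum_left, smul_left, repr_eq_div_of_iIsOrtho he hne, div_mul_eq_mul_div]

theorem trace_mul_self_eq_neg_sum_of_iIsOrtho [DecidableEq ι] (hb : b.IsSymm)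
    (he : b.iIsOrtho e) (hne : ∀ i, b (e i) (e i) ≠ 0) {B : End K V}
    (hB : ∀ x y, b (B x) y = -b x (B y)) :
    trace K V (B * B) =
      -∑ i, ∑ j, b (B (e i)) (e j) ^ 2 / (b (e i) (e i) * b (e j) (e j)) := by
  rw [trace_eq_sum_div_of_iIsOrtho he hne, ← Finset.sum_neg_distrib]
  refine Finset.sum_congr rfl fun i _ => ?_
  rw [Module.End.mul_apply, hB, apply_eq_sum_div_of_iIsOrtho he hne, neg_div, Finset.sum_div]
  congr 1
  refine Finset.sum_congr rfl fun j _ => ?_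
  rw [hb.eq (e j)]
  field_simp

variable [LinearOrder K] [IsStrictOrderedRing K]

theorem eq_zero_of_trace_mul_self_eq_zero [DecidableEq ι] (hb : b.IsSymm) (he : b.iIsOrtho e)
    (hne : ∀ i, b (e i) (e i) ≠ 0) {B : End K V}
    (hB : ∀ x y, b (B x) y = -b x (B y))
    (hblock : ∀ i j, b (B (e i)) (e j) = 0 ∨ b (e i) (e i) * b (e j) (e j) < 0)
    (htr : trace K V (B * B) = 0) : B = 0 := by
  have hterm : ∀ i j, b (B (e i)) (e j) ^ 2 / (b (e i) (e i) * b (e j) (e j)) ≤ 0 := by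
    intro i j
    rcases hblock i j with h | h
    · simp [h]
    · exact div_nonpos_of_nonneg_of_nonpos (sq_nonneg _) h.le
  rw [trace_mul_self_eq_neg_sum_of_iIsOrtho hb he hne hB, neg_eq_zero,
    Finset.sum_eq_zero_iff_of_nonpos fun i _ => Finset.sum_nonpos fun j _ => hterm i j] at htr
  have hzero : ∀ i j, b (B (e i)) (e j) = 0 := by
    intro i j
    have hij := (Finset.sum_eq_zero_iff_of_nonpos fun j _ => hterm i j).1
      (htr i (Finset.mem_univ _)) j (Finset.mem_univ _)
    rcases hblock i j with h | h
    · exact h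
    · exact pow_eq_zero_iff two_ne_zero |>.1 ((div_eq_zero_iff.1 hij).resolve_right h.ne)
  exact e.ext fun i => e.ext_elem fun j => by
    simp [repr_eq_div_of_iIsOrtho he hne, hzero]

end OrthogonalBasis

section ComplexStructure

variable {V : Type*} [AddCommGroup V] [Module ℝ V] {b : LinearMap.BilinForm ℝ V} {J : End ℝ V}

theorem apply_map_left_eq_neg (hJ : J * J = -1) (hJb : ∀ x y, b (J x) (J y) = b x y)
    (x y : V) : b (J x) y = -b x (J y) := by
  have h := hJb x (J y)
  rw [← Module.End.mul_apply J J, hJ] at h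
  simpa using congrArg Neg.neg h

theorem apply_self_map_eq_zero (hb : b.IsSymm) (hJ : J * J = -1)
    (hJb : ∀ x y, b (J x) (J y) = b x y) (x : V) : b x (J x) = 0 := by
  have h := apply_map_left_eq_neg hJ hJb x x
  rw [hb.eq] at h
  linarith

theorem apply_commutator_left_eq_neg (hJ : J * J = -1) (hJb : ∀ x y, b (J x) (J y) = b x y)
    {F : End ℝ V} (hF : ∀ x y, b (F x) y = -b x (F y)) (x y : V) :
    b ((J * F - F * J) x) y = -b x ((J * F - F * J) y) := by
  simp only [LinearMap.sub_apply, Module.End.mul_apply, map_sub, apply_map_left_eq_neg hJ hJb,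
    hF]
  ring

variable {B : End ℝ V}

theorem apply_self_eq_zero_of_skew (hb : b.IsSymm) (hB : ∀ x y, b (B x) y = -b x (B y))
    (x : V) : b (B x) x = 0 := by
  have h := hB x x
  rw [hb.eq x] at h
  linarith

theorem apply_map_eq_zero_of_anticommute (hb : b.IsSymm) (hJ : J * J = -1)
    (hJb : ∀ x y, b (J x) (J y) = b x y) (hB : ∀ x y, b (B x) y = -b x (B y))
    (hBJ : B * J = -(J * B)) (x : V) : b (B x) (J x) = 0 := by
  have hBJx : B (J x) = -J (B x) := by simpa using congr($hBJ x)
  have h : b (B x) (J x) = -b (B x) (J x) :=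
    calc b (B x) (J x) = -b x (B (J x)) := hB _ _
      _ = b x (J (B x)) := by rw [hBJx, map_neg, neg_neg]
      _ = -b (B x) (J x) := by rw [← hb.eq, apply_map_left_eq_neg hJ hJb]
  linarith

theorem exists_neg_orthogonal (hb : b.IsSymm) (hJ : J * J = -1)
    (hJb : ∀ x y, b (J x) (J y) = b x y) {u n : V} (hu : 0 < b u u) (hn : b n n < 0) :
    ∃ w, b w w < 0 ∧ b u w = 0 ∧ b u (J w) = 0 := by
  have huJu := apply_self_map_eq_zero hb hJ hJb u
  have hJuu : b (J u) u = 0 := by rw [hb.eq, huJu]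
  have hJuJu := hJb u u
  set w := n - (b n u / b u u) • u - (b n (J u) / b u u) • J u with hw
  have hwu : b w u = 0 := by
    simp only [w, sub_left, smul_left, hJuu]
    field_simp
    ring
  have hwJu : b w (J u) = 0 := by
    simp only [w, sub_left, smul_left, huJu, hJuJu]
    field_simp
    ring
  have hww : b w w = b n n - (b n u ^ 2 + b n (J u) ^ 2) / b u u := by
    have hwn : b w w = b w n := by
      nth_rewrite 2 [hw]
      simp only [sub_right, smul_right, hwu, hwJu, mul_zero, sub_zero]
    rw [hwn, hw]
    simp only [sub_left, smul_left, hb.eq u n, hb.eq (J u) n]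
    field_simp
    ring
  refine ⟨w, ?_, by rw [hb.eq, hwu], ?_⟩
  · rw [hww]
    have := div_nonneg (add_nonneg (sq_nonneg (b n u)) (sq_nonneg (b n (J u)))) hu.le
    linarith
  · rw [← neg_eq_zero, ← apply_map_left_eq_neg hJ hJb, hb.eq, hwJu]

theorem iIsOrtho_frame (hb : b.IsSymm) (hJ : J * J = -1) (hJb : ∀ x y, b (J x) (J y) = b x y)
    {u w : V} (huw : b u w = 0) (huJw : b u (J w) = 0) : b.iIsOrtho ![u, J u, w, J w] := by
  have hJuw : b (J u) w = 0 := by rw [apply_map_left_eq_neg hJ hJb, huJw, neg_zero]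
  have hJuJw : b (J u) (J w) = 0 := by rw [hJb, huw]
  have huJu := apply_self_map_eq_zero hb hJ hJb u
  have hwJw := apply_self_map_eq_zero hb hJ hJb w
  have hlt : ∀ i j : Fin 4, i < j → b (![u, J u, w, J w] i) (![u, J u, w, J w] j) = 0 := by
    intro i j hij
    fin_cases i <;> fin_cases j <;> simp_all
  rw [iIsOrtho_def]
  intro i j hij
  rcases hij.lt_or_gt with h | h
  · exact hlt i j h
  · rw [hb.eq]
    exact hlt j i h

theorem eq_zero_of_trace_mul_self_eq_zero_of_neutral [FiniteDimensional ℝ V]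
    (hV : finrank ℝ V = 4) (hb : b.IsSymm) (hJ : J * J = -1)
    (hJb : ∀ x y, b (J x) (J y) = b x y) {u n : V} (hu : 0 < b u u) (hn : b n n < 0)
    {B : End ℝ V} (hB : ∀ x y, b (B x) y = -b x (B y)) (hBJ : B * J = -(J * B))
    (htr : trace ℝ V (B * B) = 0) : B = 0 := by
  obtain ⟨w, hw, huw, huJw⟩ := exists_neg_orthogonal hb hJ hJb hu hn
  have he := iIsOrtho_frame hb hJ hJb huw huJw
  have hnorm : ∀ i, b (![u, J u, w, J w] i) (![u, J u, w, J w] i) ≠ 0 := by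
    intro i
    fin_cases i <;> simp [hJb, hu.ne', hw.ne]
  let e : Basis (Fin 4) ℝ V := basisOfLinearIndependentOfCardEqFinrank
    (linearIndependent_of_iIsOrtho he hnorm) (by simp [hV])
  have hee : ⇑e = ![u, J u, w, J w] := coe_basisOfLinearIndependentOfCardEqFinrank _ _
  have hself := apply_self_eq_zero_of_skew hb hB
  have hmap := apply_map_eq_zero_of_anticommute hb hJ hJb hB hBJ
  have hBJx : ∀ x, B (J x) = -J (B x) := fun x => by simpa using congr($hBJ x)
  refine eq_zero_of_trace_mul_self_eq_zero hb (hee ▸ he) (hee ▸ hnorm) hB ?_ htr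
  intro i j
  rw [hee]
  fin_cases i <;> fin_cases j <;> simp [hself, hmap, hBJx, hJb, apply_map_left_eq_neg hJ hJb,
    mul_neg_of_pos_of_neg hu hw, mul_neg_of_neg_of_pos hw hu]

end ComplexStructure

end LinearMap.BilinForm

theorem exists_pos_and_neg_of_hasSignature {V : Type*} [AddCommGroup V] [Module ℝ V]
    {φ : V → V → ℝ} {p q : ℕ} (h : hasSignature φ p q) (hp : p ≠ 0) (hq : q ≠ 0) :
    (∃ u, 0 < φ u u) ∧ ∃ n, φ n n < 0 := by
  obtain ⟨N, P, -, -, -, hN, hP, hdimN, hdimP⟩ := h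
  obtain ⟨u, huP, hu⟩ := Submodule.exists_mem_ne_zero_of_ne_bot fun h : P = ⊥ => hq (by
    rw [← hdimP, h, finrank_bot])
  obtain ⟨n, hnN, hn⟩ := Submodule.exists_mem_ne_zero_of_ne_bot fun h : N = ⊥ => hp (by
    rw [← hdimN, h, finrank_bot])
  exact ⟨⟨u, hP u huP hu⟩, n, hN n hnN hn⟩

theorem stmt_14_general
    (φ : (Fin 4 → ℝ) → (Fin 4 → ℝ) → ℝ)
    (hadd : ∀ x y z : Fin 4 → ℝ, φ (x + y) z = φ x z + φ y z)
    (hsmul : ∀ (c : ℝ) (x y : Fin 4 → ℝ), φ (c • x) y = c * φ x y)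
    (hsymm : ∀ x y : Fin 4 → ℝ, φ x y = φ y x)
    (hsig : hasSignature φ 2 2)
    (J : (Fin 4 → ℝ) →ₗ[ℝ] (Fin 4 → ℝ))
    (hJ2 : ∀ x : Fin 4 → ℝ, J (J x) = -x)
    (hherm : ∀ x y : Fin 4 → ℝ, φ (J x) (J y) = φ x y)
    (F D : (Fin 4 → ℝ) →ₗ[ℝ] (Fin 4 → ℝ))
    (hFnil : ∃ k, F ^ k = 0)
    (hFskew : ∀ x y : Fin 4 → ℝ, φ (F x) y = - φ x (F y))
    (hF0 : F ≠ 0)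
    (hFD : ∀ x : Fin 4 → ℝ, F (D x) = D (F x))
    (hJcond : ∀ x : Fin 4 → ℝ, F (J x) + J (D (J x)) = J (F x) + J (J (D x))) :
    Submodule.map J (LinearMap.ker F) = LinearMap.ker F ∧
    LinearMap.range F = LinearMap.ker F ∧
    Module.finrank ℝ (LinearMap.ker F) = 2 ∧
    (∀ x ∈ LinearMap.ker F, J x ∈ LinearMap.ker F) ∧
    (∀ x ∈ LinearMap.ker F, ∀ y ∈ LinearMap.ker F, φ x y = 0) := by
  obtain ⟨b, rfl⟩ : ∃ b : LinearMap.BilinForm ℝ (Fin 4 → ℝ), (fun x y => b x y) = φ :=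
    ⟨LinearMap.mk₂ ℝ φ hadd hsmul (fun x y z => by simp only [hsymm x, hadd])
      (fun c x y => by simp only [hsymm x, hsmul, smul_eq_mul]), rfl⟩
  beta_reduce at hFskew
  have hb : b.IsSymm := ⟨hsymm⟩
  have hJ : J * J = -1 := LinearMap.ext hJ2
  obtain ⟨⟨u, hu⟩, n, hn⟩ := exists_pos_and_neg_of_hasSignature hsig two_ne_zero two_ne_zero
  have hcond : J * F - F * J = D + J * D * J := by
    refine LinearMap.ext fun x => ?_
    have h := hJcond x
    rw [hJ2] at h
    simp only [LinearMap.sub_apply, LinearMap.add_apply, Module.End.mul_apply]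
    linear_combination -h
  have hJF : J * F - F * J = 0 :=
    LinearMap.BilinForm.eq_zero_of_trace_mul_self_eq_zero_of_neutral (by simp) hb hJ hherm hu hn
      (LinearMap.BilinForm.apply_commutator_left_eq_neg hJ hherm hFskew)
      (commutator_mul_eq_neg_mul hJ F)
      (trace_commutator_mul_self_eq_zero hJ (LinearMap.ext hFD) hcond)
  obtain ⟨hrange, hdim⟩ :=
    range_eq_ker_and_finrank_eq_two_of_commute (by simp) hJ (sub_eq_zero.1 hJF) hFnil hF0
  have hker : ∀ x ∈ LinearMap.ker F, J x ∈ LinearMap.ker F := fun x hx => by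
    rw [LinearMap.mem_ker, ← Module.End.mul_apply, ← sub_eq_zero.1 hJF, Module.End.mul_apply,
      LinearMap.mem_ker.1 hx, map_zero]
  refine ⟨Submodule.map_eq_self_of_mapsTo hJ hker, hrange, hdim, hker, ?_⟩
  rintro x hx y hy
  obtain ⟨a, rfl⟩ := hrange ▸ hx
  show b (F a) y = 0
  rw [hFskew, LinearMap.mem_ker.1 hy, map_zero, neg_zero]

/-- for nilpotent commuting skewsymmetric `F ≠ 0`, `D` on neutral
pseudo-Hermitian `ℝ⁴` with `[F + JD, J] = 0`, one has
`Ker F = J(Ker F) = Im F`; in particular `Ker F` is a 2-dimensional `J`-invariant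
totally isotropic subspace. -/
theorem stmt_14
    (φ : (Fin 4 → ℝ) → (Fin 4 → ℝ) → ℝ)
    (hadd : ∀ x y z : Fin 4 → ℝ, φ (x + y) z = φ x z + φ y z)
    (hsmul : ∀ (c : ℝ) (x y : Fin 4 → ℝ), φ (c • x) y = c * φ x y)
    (hsymm : ∀ x y : Fin 4 → ℝ, φ x y = φ y x)
    (hnondeg : ∀ x : Fin 4 → ℝ, (∀ y : Fin 4 → ℝ, φ x y = 0) → x = 0)
    (hsig : hasSignature φ 2 2)
    (J : (Fin 4 → ℝ) →ₗ[ℝ] (Fin 4 → ℝ))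
    (hJ2 : ∀ x : Fin 4 → ℝ, J (J x) = -x)
    (hherm : ∀ x y : Fin 4 → ℝ, φ (J x) (J y) = φ x y)
    (F D : (Fin 4 → ℝ) →ₗ[ℝ] (Fin 4 → ℝ))
    (hFnil : ∃ k, F ^ k = 0) (hDnil : ∃ k, D ^ k = 0)
    (hFskew : ∀ x y : Fin 4 → ℝ, φ (F x) y = - φ x (F y))
    (hDskew : ∀ x y : Fin 4 → ℝ, φ (D x) y = - φ x (D y))
    (hF0 : F ≠ 0)
    (hFD : ∀ x : Fin 4 → ℝ, F (D x) = D (F x))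
    (hJcond : ∀ x : Fin 4 → ℝ, F (J x) + J (D (J x)) = J (F x) + J (J (D x))) :
    Submodule.map J (LinearMap.ker F) = LinearMap.ker F ∧
    LinearMap.range F = LinearMap.ker F ∧
    Module.finrank ℝ (LinearMap.ker F) = 2 ∧
    (∀ x ∈ LinearMap.ker F, J x ∈ LinearMap.ker F) ∧
    (∀ x ∈ LinearMap.ker F, ∀ y ∈ LinearMap.ker F, φ x y = 0) :=
  stmt_14_general φ hadd hsmul hsymm hsig J hJ2 hherm F D hFnil hFskew hF0 hFD hJcond
end

section
/- Consider ℝ⁴ with a linear map J satisfying J² = −id and a nondegenerate symmetric bilinear form φ of neutral signature (2,2) with φ(Jx,Jy) = φ(x,y). Let F, D be nilpotent φ-skewsymmetric linear endomorphisms with F ≠ 0, F∘D = D∘F, and (F + J∘D)∘J = J∘(F + J∘D). Let u₁ ∈ Ker(F) be nonzero and let u₂ be a nonzero isotropic vector with φ(u₁,u₂) = 1 and φ(Ju₁,u₂) = 0. Then {u₁, Ju₁, u₂, Ju₂} is a basis of ℝ⁴, the only nonzero φ-pairings among these basis vectors are φ(u₁,u₂) = φ(Ju₁,Ju₂) = 1,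 and there exist a, b ∈ ℝ with a ≠ 0 such that F(u₂) = aJu₁, F(Ju₂) = −au₁, D(u₂) = bJu₁, D(Ju₂) = −bu₁, and D(u₁) = D(Ju₁) = 0. -/
open TensorProduct

set_option maxHeartbeats 4000000 in
/-- in the setting of the previous lemma, given `0 ≠ u₁ ∈ Ker F` and
an isotropic `u₂` with `φ(u₁,u₂) = 1`, `φ(Ju₁,u₂) = 0`, the set `{u₁,Ju₁,u₂,Ju₂}`
is a basis, the only nonzero pairings are `φ(u₁,u₂) = φ(Ju₁,Ju₂) = 1` and there are
`a ≠ 0`, `b` with `Fu₂ = aJu₁`, `F(Ju₂) = -au₁`, `Du₂ = bJu₁`, `D(Ju₂) = -bu₁`,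
`Du₁ = D(Ju₁) = 0`. -/
theorem stmt_15
    (φ : (Fin 4 → ℝ) → (Fin 4 → ℝ) → ℝ)
    (hadd : ∀ x y z : Fin 4 → ℝ, φ (x + y) z = φ x z + φ y z)
    (hsmul : ∀ (c : ℝ) (x y : Fin 4 → ℝ), φ (c • x) y = c * φ x y)
    (hsymm : ∀ x y : Fin 4 → ℝ, φ x y = φ y x)
    (hnondeg : ∀ x : Fin 4 → ℝ, (∀ y : Fin 4 → ℝ, φ x y = 0) → x = 0)
    (hsig : hasSignature φ 2 2)
    (J : (Fin 4 → ℝ) →ₗ[ℝ] (Fin 4 → ℝ))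
    (hJ2 : ∀ x : Fin 4 → ℝ, J (J x) = -x)
    (hherm : ∀ x y : Fin 4 → ℝ, φ (J x) (J y) = φ x y)
    (F D : (Fin 4 → ℝ) →ₗ[ℝ] (Fin 4 → ℝ))
    (hFnil : ∃ k, F ^ k = 0) (hDnil : ∃ k, D ^ k = 0)
    (hFskew : ∀ x y : Fin 4 → ℝ, φ (F x) y = - φ x (F y))
    (hDskew : ∀ x y : Fin 4 → ℝ, φ (D x) y = - φ x (D y))
    (hF0 : F ≠ 0)
    (hFD : ∀ x : Fin 4 → ℝ, F (D x) = D (F x))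
    (hJcond : ∀ x : Fin 4 → ℝ, F (J x) + J (D (J x)) = J (F x) + J (J (D x)))
    (u₁ u₂ : Fin 4 → ℝ)
    (hu₁ : u₁ ∈ LinearMap.ker F) (hu₁0 : u₁ ≠ 0) (hu₂0 : u₂ ≠ 0)
    (hu₂iso : φ u₂ u₂ = 0) (h12 : φ u₁ u₂ = 1) (hJ12 : φ (J u₁) u₂ = 0) :
    (LinearIndependent ℝ ![u₁, J u₁, u₂, J u₂] ∧
      Submodule.span ℝ {u₁, J u₁, u₂, J u₂} = ⊤) ∧
    (φ u₁ u₁ = 0 ∧ φ u₁ (J u₁) = 0 ∧ φ u₁ u₂ = 1 ∧ φ u₁ (J u₂) = 0 ∧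
      φ (J u₁) (J u₁) = 0 ∧ φ (J u₁) u₂ = 0 ∧ φ (J u₁) (J u₂) = 1 ∧
      φ u₂ u₂ = 0 ∧ φ u₂ (J u₂) = 0 ∧ φ (J u₂) (J u₂) = 0) ∧
    (∃ a b : ℝ, a ≠ 0 ∧ F u₂ = a • J u₁ ∧ F (J u₂) = -(a • u₁) ∧
      D u₂ = b • J u₁ ∧ D (J u₂) = -(b • u₁) ∧ D u₁ = 0 ∧ D (J u₁) = 0) := by

  classical
  -- basic bilinearity lemmas
  have phiL_neg : ∀ x y : Fin 4 → ℝ, φ (-x) y = -φ x y := by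
    intro x y
    have h := hsmul (-1) x y
    simpa using h
  have phiL_zero : ∀ y : Fin 4 → ℝ, φ 0 y = 0 := by
    intro y
    have h := hsmul 0 0 y
    simpa using h
  have phiR_zero : ∀ x : Fin 4 → ℝ, φ x 0 = 0 := by
    intro x; rw [hsymm]; exact phiL_zero x
  have phiR_add : ∀ x y z : Fin 4 → ℝ, φ x (y + z) = φ x y + φ x z := by
    intro x y z; rw [hsymm, hadd, hsymm y x, hsymm z x]
  have phiR_smul : ∀ (c : ℝ) (x y : Fin 4 → ℝ), φ x (c • y) = c * φ x y := by
    intro c x y; rw [hsymm, hsmul, hsymm]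
  have phiR_neg : ∀ x y : Fin 4 → ℝ, φ x (-y) = -φ x y := by
    intro x y; rw [hsymm, phiL_neg, hsymm]
  have phiL_sub : ∀ x y z : Fin 4 → ℝ, φ (x - y) z = φ x z - φ y z := by
    intro x y z; rw [sub_eq_add_neg, hadd, phiL_neg, sub_eq_add_neg]
  have phiJ : ∀ x y : Fin 4 → ℝ, φ (J x) y = -φ x (J y) := by
    intro x y
    have h1 := hherm x (J y)
    rw [hJ2 y, phiR_neg] at h1
    linarith
  have phiJself : ∀ x : Fin 4 → ℝ, φ x (J x) = 0 := by
    intro x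
    have h := phiJ x x
    have h2 := hsymm (J x) x
    linarith
  have phiFself : ∀ x : Fin 4 → ℝ, φ (F x) x = 0 := by
    intro x
    have h := hFskew x x
    have h2 := hsymm x (F x)
    linarith
  have phiDself : ∀ x : Fin 4 → ℝ, φ (D x) x = 0 := by
    intro x
    have h := hDskew x x
    have h2 := hsymm x (D x)
    linarith
  have hFe1 : F u₁ = 0 := LinearMap.mem_ker.mp hu₁
  -- the Gram parameter
  obtain ⟨t, ht⟩ : ∃ t, φ u₁ u₁ = t := ⟨_, rfl⟩
  -- the pairing table
  have t11 : φ u₁ u₁ = t := ht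
  have t12 : φ u₁ (J u₁) = 0 := phiJself u₁
  have t13 : φ u₁ u₂ = 1 := h12
  have t21 : φ (J u₁) u₁ = 0 := by rw [hsymm]; exact t12
  have t22 : φ (J u₁) (J u₁) = t := by rw [hherm]; exact ht
  have t23 : φ (J u₁) u₂ = 0 := hJ12
  have t24 : φ (J u₁) (J u₂) = 1 := by rw [hherm]; exact h12
  have t14 : φ u₁ (J u₂) = 0 := by
    have h := phiJ u₁ u₂
    rw [hJ12] at h
    linarith
  have t31 : φ u₂ u₁ = 1 := by rw [hsymm]; exact t13
  have t32 : φ u₂ (J u₁) = 0 := by rw [hsymm]; exact t23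
  have t33 : φ u₂ u₂ = 0 := hu₂iso
  have t34 : φ u₂ (J u₂) = 0 := phiJself u₂
  have t41 : φ (J u₂) u₁ = 0 := by rw [hsymm]; exact t14
  have t42 : φ (J u₂) (J u₁) = 1 := by rw [hsymm]; exact t24
  have t43 : φ (J u₂) u₂ = 0 := by rw [hsymm]; exact t34
  have t44 : φ (J u₂) (J u₂) = 0 := by rw [hherm]; exact hu₂iso
  -- linear independence
  have hli : LinearIndependent ℝ ![u₁, J u₁, u₂, J u₂] := by
    rw [Fintype.linearIndependent_iff]
    intro g hg
    rw [Fin.sum_univ_four] at hg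
    simp only [Matrix.cons_val_zero, Matrix.cons_val_one, Matrix.head_cons,
      Matrix.cons_val_two, Matrix.tail_cons, Matrix.cons_val_three] at hg
    have c3 : φ (g 0 • u₁ + g 1 • J u₁ + g 2 • u₂ + g 3 • J u₂) u₂ = 0 := by
      rw [hg]; exact phiL_zero _
    have c4 : φ (g 0 • u₁ + g 1 • J u₁ + g 2 • u₂ + g 3 • J u₂) (J u₂) = 0 := by
      rw [hg]; exact phiL_zero _
    have c1 : φ (g 0 • u₁ + g 1 • J u₁ + g 2 • u₂ + g 3 • J u₂) u₁ = 0 := by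
      rw [hg]; exact phiL_zero _
    have c2 : φ (g 0 • u₁ + g 1 • J u₁ + g 2 • u₂ + g 3 • J u₂) (J u₁) = 0 := by
      rw [hg]; exact phiL_zero _
    simp only [hadd, hsmul, t11, t12, t13, t14, t21, t22, t23, t24, t31, t32, t33, t34,
      t41, t42, t43, t44, mul_zero, mul_one, add_zero, zero_add] at c1 c2 c3 c4
    have e2 : g 2 = 0 := by rw [c3] at c1; simpa using c1
    have e3 : g 3 = 0 := by rw [c4] at c2; simpa using c2
    intro i
    fin_cases i
    · exact c3
    · exact c4
    · exact e2
    · exact e3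
  have hspan : Submodule.span ℝ ({u₁, J u₁, u₂, J u₂} : Set (Fin 4 → ℝ)) = ⊤ := by
    have hcard : Fintype.card (Fin 4) = Module.finrank ℝ (Fin 4 → ℝ) := by
      simp [Module.finrank_fintype_fun_eq_card]
    have h := hli.span_eq_top_of_card_eq_finrank hcard
    have hrange : Set.range ![u₁, J u₁, u₂, J u₂] = ({u₁, J u₁, u₂, J u₂} : Set (Fin 4 → ℝ)) := by
      ext x
      constructor
      · rintro ⟨i, rfl⟩
        fin_cases i <;> simp
      · rintro (rfl | rfl | rfl | rfl)
        · exact ⟨0, rfl⟩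
        · exact ⟨1, rfl⟩
        · exact ⟨2, rfl⟩
        · exact ⟨3, rfl⟩
    rwa [hrange] at h
  -- a vector pairing to zero with the basis is zero
  have key0 : ∀ v : Fin 4 → ℝ, φ v u₁ = 0 → φ v (J u₁) = 0 → φ v u₂ = 0 →
      φ v (J u₂) = 0 → v = 0 := by
    intro v h1 h2 h3 h4
    refine hnondeg v (fun y => ?_)
    have hy : y ∈ Submodule.span ℝ ({u₁, J u₁, u₂, J u₂} : Set (Fin 4 → ℝ)) := by
      rw [hspan]; exact Submodule.mem_top
    induction hy using Submodule.span_induction with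
    | mem x hx =>
      rcases hx with rfl | rfl | rfl | rfl
      · exact h1
      · exact h2
      · exact h3
      · exact h4
    | zero => exact phiR_zero v
    | add x y _ _ ihx ihy => rw [phiR_add, ihx, ihy, add_zero]
    | smul c x _ ihx => rw [phiR_smul, ihx, mul_zero]
  -- scalar parameters
  obtain ⟨p, hp⟩ : ∃ p, φ (F (J u₁)) u₂ = p := ⟨_, rfl⟩
  obtain ⟨q, hq⟩ : ∃ q, φ (F (J u₁)) (J u₂) = q := ⟨_, rfl⟩
  obtain ⟨r, hr⟩ : ∃ r, φ (F (J u₂)) u₂ = r := ⟨_, rfl⟩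
  obtain ⟨d11, hd11⟩ : ∃ d, φ (D u₁) u₂ = d := ⟨_, rfl⟩
  obtain ⟨d21, hd21⟩ : ∃ d, φ (D u₁) (J u₂) = d := ⟨_, rfl⟩
  obtain ⟨d41, hd41⟩ : ∃ d, φ (D u₁) (J u₁) = d := ⟨_, rfl⟩
  obtain ⟨d12, hd12⟩ : ∃ d, φ (D (J u₁)) u₂ = d := ⟨_, rfl⟩
  obtain ⟨d22, hd22⟩ : ∃ d, φ (D (J u₁)) (J u₂) = d := ⟨_, rfl⟩
  obtain ⟨d14, hd14⟩ : ∃ d, φ (D (J u₂)) u₂ = d := ⟨_, rfl⟩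
  -- auxiliary pairing facts for images under F
  have fe2_1 : φ (F (J u₁)) u₁ = 0 := by rw [hFskew, hFe1, phiR_zero, neg_zero]
  have fe2_2 : φ (F (J u₁)) (J u₁) = 0 := phiFself (J u₁)
  have fe3_1 : φ (F u₂) u₁ = 0 := by rw [hFskew, hFe1, phiR_zero, neg_zero]
  have fe3_2 : φ (F u₂) (J u₁) = -p := by rw [hFskew, hsymm, hp]
  have fe3_3 : φ (F u₂) u₂ = 0 := phiFself u₂
  have fe3_4 : φ (F u₂) (J u₂) = -r := by rw [hFskew, hsymm, hr]
  have fe4_1 : φ (F (J u₂)) u₁ = 0 := by rw [hFskew, hFe1, phiR_zero, neg_zero]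
  have fe4_2 : φ (F (J u₂)) (J u₁) = -q := by rw [hFskew, hsymm, hq]
  have fe4_4 : φ (F (J u₂)) (J u₂) = 0 := phiFself (J u₂)
  -- auxiliary pairing facts for images under D
  have de1_1 : φ (D u₁) u₁ = 0 := phiDself u₁
  have de2_1 : φ (D (J u₁)) u₁ = -d41 := by rw [hDskew, hsymm, hd41]
  have de2_2 : φ (D (J u₁)) (J u₁) = 0 := phiDself (J u₁)
  have de3_1 : φ (D u₂) u₁ = -d11 := by rw [hDskew, hsymm, hd11]
  have de3_2 : φ (D u₂) (J u₁) = -d12 := by rw [hDskew, hsymm, hd12]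
  have de3_3 : φ (D u₂) u₂ = 0 := phiDself u₂
  have de3_4 : φ (D u₂) (J u₂) = -d14 := by rw [hDskew, hsymm, hd14]
  have de4_1 : φ (D (J u₂)) u₁ = -d21 := by rw [hDskew, hsymm, hd21]
  have de4_2 : φ (D (J u₂)) (J u₁) = -d22 := by rw [hDskew, hsymm, hd22]
  have de4_4 : φ (D (J u₂)) (J u₂) = 0 := phiDself (J u₂)
  -- expansions in the basis
  have hFe2x : F (J u₁) = p • u₁ + q • J u₁ + (-(t*p)) • u₂ + (-(t*q)) • J u₂ := by
    refine sub_eq_zero.mp (key0 _ ?_ ?_ ?_ ?_) <;>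
      simp only [phiL_sub, hadd, hsmul, t11, t12, t13, t14, t21, t22, t23, t24, t31, t32,
        t33, t34, t41, t42, t43, t44, fe2_1, fe2_2, hp, hq] <;> ring
  have hFe3x : F u₂ = (-r) • J u₁ + (t*r - p) • J u₂ := by
    refine sub_eq_zero.mp (key0 _ ?_ ?_ ?_ ?_) <;>
      simp only [phiL_sub, hadd, hsmul, t11, t12, t13, t14, t21, t22, t23, t24, t31, t32,
        t33, t34, t41, t42, t43, t44, fe3_1, fe3_2, fe3_3, fe3_4] <;> ring
  have hFe4x : F (J u₂) = r • u₁ + (-(t*r)) • u₂ + (-q) • J u₂ := by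
    refine sub_eq_zero.mp (key0 _ ?_ ?_ ?_ ?_) <;>
      simp only [phiL_sub, hadd, hsmul, t11, t12, t13, t14, t21, t22, t23, t24, t31, t32,
        t33, t34, t41, t42, t43, t44, fe4_1, fe4_2, hr, fe4_4] <;> ring
  have hDe1x : D u₁ = d11 • u₁ + d21 • J u₁ + (-(t*d11)) • u₂ + (d41 - t*d21) • J u₂ := by
    refine sub_eq_zero.mp (key0 _ ?_ ?_ ?_ ?_) <;>
      simp only [phiL_sub, hadd, hsmul, t11, t12, t13, t14, t21, t22, t23, t24, t31, t32,
        t33, t34, t41, t42, t43, t44, de1_1, hd41, hd11, hd21] <;> ring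
  have hDe2x : D (J u₁) = d12 • u₁ + d22 • J u₁ + (-(d41 + t*d12)) • u₂ + (-(t*d22)) • J u₂ := by
    refine sub_eq_zero.mp (key0 _ ?_ ?_ ?_ ?_) <;>
      simp only [phiL_sub, hadd, hsmul, t11, t12, t13, t14, t21, t22, t23, t24, t31, t32,
        t33, t34, t41, t42, t43, t44, de2_1, de2_2, hd12, hd22] <;> ring
  have hDe3x : D u₂ = (-d14) • J u₁ + (-d11) • u₂ + (t*d14 - d12) • J u₂ := by
    refine sub_eq_zero.mp (key0 _ ?_ ?_ ?_ ?_) <;>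
      simp only [phiL_sub, hadd, hsmul, t11, t12, t13, t14, t21, t22, t23, t24, t31, t32,
        t33, t34, t41, t42, t43, t44, de3_1, de3_2, de3_3, de3_4] <;> ring
  have hDe4x : D (J u₂) = d14 • u₁ + (-(d21 + t*d14)) • u₂ + (-d22) • J u₂ := by
    refine sub_eq_zero.mp (key0 _ ?_ ?_ ?_ ?_) <;>
      simp only [phiL_sub, hadd, hsmul, t11, t12, t13, t14, t21, t22, t23, t24, t31, t32,
        t33, t34, t41, t42, t43, t44, de4_1, de4_2, hd14, de4_4] <;> ring
  -- general expansion
  have expand : ∀ v : Fin 4 → ℝ, v = φ v u₂ • u₁ + φ v (J u₂) • J u₁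
      + (φ v u₁ - t * φ v u₂) • u₂ + (φ v (J u₁) - t * φ v (J u₂)) • J u₂ := by
    intro v
    refine sub_eq_zero.mp (key0 _ ?_ ?_ ?_ ?_) <;>
      simp only [phiL_sub, hadd, hsmul, t11, t12, t13, t14, t21, t22, t23, t24, t31, t32,
        t33, t34, t41, t42, t43, t44] <;> ring
  -- J-compatibility conditions
  have hv := hJcond u₁
  simp only [hFe1, map_zero, zero_add, hJ2] at hv
  -- hv : F (J u₁) + J (D (J u₁)) = -(D u₁)
  have HJ1 : p + d11 - d22 = 0 := by
    have h0 : φ (F (J u₁) + J (D (J u₁))) u₂ = φ (-(D u₁)) u₂ := by rw [hv]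
    rw [hadd, hp, phiJ, hd22, phiL_neg, hd11] at h0
    linarith
  have HJ2 : q + d12 + d21 = 0 := by
    have h0 : φ (F (J u₁) + J (D (J u₁))) (J u₂) = φ (-(D u₁)) (J u₂) := by rw [hv]
    rw [hadd, hq, phiJ, hJ2, phiR_neg, hd12, phiL_neg, hd21] at h0
    linarith
  -- commutation relations
  have hFDu1 : F (D u₁) = 0 := by rw [hFD, hFe1, map_zero]
  have E1 : d21 * q + t * d11 * r = 0 := by
    have h0 : φ (F (D u₁)) (J u₂) = 0 := by rw [hFDu1]; exact phiL_zero _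
    rw [hDe1x] at h0
    simp only [map_add, map_smul, hFe1, smul_zero, zero_add, add_zero, hadd, hsmul,
      phiL_zero, hq, fe3_4, fe4_4, mul_zero, zero_mul] at h0
    linear_combination h0
  have E2 : d11 * r + r * d22 - q * d14 = 0 := by
    have h0 : φ (F (D u₂)) (J u₂) = φ (D (F u₂)) (J u₂) := by rw [hFD]
    rw [hDe3x, hFe3x] at h0
    simp only [map_add, map_smul, hadd, hsmul, hq, fe3_4, fe4_4, hd22, de4_4,
      mul_zero, zero_mul, add_zero, zero_add] at h0
    linear_combination h0
  have E3 : p * d11 - q * (t * d14) + q * d12 + (t * r - p) * d22 = 0 := by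
    have h0 : φ (F (D u₂)) (J u₁) = φ (D (F u₂)) (J u₁) := by rw [hFD]
    rw [hDe3x, hFe3x] at h0
    simp only [map_add, map_smul, hadd, hsmul, fe2_2, fe3_2, fe4_2, de2_2, de4_2,
      mul_zero, zero_mul, add_zero, zero_add] at h0
    linear_combination h0
  -- p = q = 0
  have hpq : p ^ 2 + q ^ 2 = 0 := by
    linear_combination (-1 : ℝ) * E1 + t * E2 - E3 + p * HJ1 + q * HJ2
  have hp2 : p = 0 := by
    have ha := sq_nonneg p
    have hb := sq_nonneg q
    have h2 : p ^ 2 = 0 := le_antisymm (by linarith) ha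
    exact pow_eq_zero_iff (by norm_num : (2:ℕ) ≠ 0) |>.mp h2
  have hq2 : q = 0 := by
    have ha := sq_nonneg p
    have hb := sq_nonneg q
    have h2 : q ^ 2 = 0 := le_antisymm (by linarith) hb
    exact pow_eq_zero_iff (by norm_num : (2:ℕ) ≠ 0) |>.mp h2
  subst hp2
  subst hq2
  simp only [zero_smul, smul_zero, mul_zero, zero_mul, neg_zero, add_zero, zero_add,
    sub_zero, zero_sub] at hFe2x hFe3x hFe4x
  -- hFe2x : F (J u₁) = 0, hFe3x : F u₂ = (-r) • J u₁ + (t*r) • J u₂,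
  -- hFe4x : F (J u₂) = r • u₁ + (-(t*r)) • u₂
  have hr0 : r ≠ 0 := by
    intro h0
    subst h0
    apply hF0
    apply LinearMap.ext
    intro v
    rw [expand v]
    simp only [map_add, map_smul, hFe1, hFe2x, hFe3x, hFe4x, smul_zero, add_zero,
      zero_add, neg_zero, zero_smul, mul_zero, zero_mul]
    simp
  -- t = 0 via nilpotency of F
  have hw0 : F (J u₂) ≠ 0 := by
    intro h0
    rw [h0, phiL_zero] at hr
    exact hr0 hr.symm
  have s1 : F (F (J u₂)) = (t * r * r) • J u₁ + (-(t * r * (t * r))) • J u₂ := by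
    conv_lhs => rw [hFe4x]
    rw [map_add, map_smul, map_smul, hFe1, hFe3x, smul_zero, zero_add]
    module
  have hF3 : F (F (F (J u₂))) = (-(t ^ 2 * r ^ 2)) • F (J u₂) := by
    rw [s1, map_add, map_smul, map_smul, hFe2x, smul_zero, zero_add]
    congr 1
    ring
  have aux : ∀ j : ℕ, (F ^ (2 * j)) (F (J u₂)) = ((-(t ^ 2 * r ^ 2)) ^ j) • F (J u₂) := by
    intro j
    induction j with
    | zero => simp
    | succ n ih =>
      have h2 : 2 * (n + 1) = 2 * n + 2 := by ring
      rw [h2, pow_add, Module.End.mul_apply]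
      have h3 : (F ^ 2) (F (J u₂)) = F (F (F (J u₂))) := by
        rw [pow_two, Module.End.mul_apply]
      rw [h3, hF3, map_smul, ih, smul_smul, pow_succ]
      congr 1
      ring
  obtain ⟨k, hk⟩ := hFnil
  have hzero : (F ^ (2 * (k + 1))) (F (J u₂)) = 0 := by
    have h2 : 2 * (k + 1) = k + (k + 2) := by ring
    rw [h2, pow_add, Module.End.mul_apply, hk, LinearMap.zero_apply]
  have ht0 : t = 0 := by
    have h0 := aux (k + 1)
    rw [hzero] at h0
    rcases smul_eq_zero.mp h0.symm with h | h
    · have h1 : -(t ^ 2 * r ^ 2) = 0 := pow_eq_zero_iff (Nat.succ_ne_zero k) |>.mp h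
      have h2 : t ^ 2 * r ^ 2 = 0 := by linarith
      rcases mul_eq_zero.mp h2 with h3 | h3
      · exact pow_eq_zero_iff (by norm_num : (2:ℕ) ≠ 0) |>.mp h3
      · exact absurd (pow_eq_zero_iff (by norm_num : (2:ℕ) ≠ 0) |>.mp h3) hr0
    · exact absurd h hw0
  subst ht0
  simp only [zero_mul, mul_zero, neg_zero, zero_smul, smul_zero, add_zero, zero_add,
    sub_zero, zero_sub] at hFe3x hFe4x hDe1x hDe2x hDe3x hDe4x
  -- hFe3x : F u₂ = (-r) • J u₁ ; hFe4x : F (J u₂) = r • u₁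
  -- hDe1x : D u₁ = d11 • u₁ + d21 • J u₁ + d41 • J u₂
  -- hDe2x : D (J u₁) = d12 • u₁ + d22 • J u₁ + (-d41) • u₂
  -- hDe3x : D u₂ = (-d14) • J u₁ + (-d11) • u₂ + (-d12) • J u₂
  -- hDe4x : D (J u₂) = d14 • u₁ + (-d21) • u₂ + (-d22) • J u₂
  -- d41 = 0
  have hd41z : d41 = 0 := by
    have h0 : φ (F (D u₁)) u₂ = 0 := by rw [hFDu1]; exact phiL_zero _
    rw [hDe1x] at h0
    simp only [map_add, map_smul, hFe1, hFe2x, hFe4x, smul_zero, zero_add, add_zero,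
      smul_smul, hadd, hsmul, phiL_zero, t13, mul_one] at h0
    rcases mul_eq_zero.mp h0 with h | h
    · exact h
    · exact absurd h hr0
  subst hd41z
  simp only [zero_smul, add_zero, neg_zero, zero_add] at hDe1x hDe2x
  -- d11 = d22 = 0 and d21 = -d12
  have hd22e : d22 = d11 := by linarith [HJ1]
  have hd11z : d11 = 0 := by
    have h1 : φ (F (D u₂)) (J u₂) = φ (D (F u₂)) (J u₂) := by rw [hFD]
    rw [hDe3x, hFe3x] at h1
    simp only [map_add, map_smul, hFe2x, hFe3x, hFe4x, hDe2x, smul_zero, zero_add,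
      add_zero, smul_smul, hadd, hsmul, t14, t24, mul_zero, zero_mul, mul_one] at h1
    have h2 : (d11 + d22) * r = 0 := by linear_combination h1
    rcases mul_eq_zero.mp h2 with h | h
    · linarith [hd22e]
    · exact absurd h hr0
  subst hd11z
  have hd22z : d22 = 0 := hd22e
  subst hd22z
  have hd21e : d21 = -d12 := by linarith [HJ2]
  subst hd21e
  simp only [zero_smul, smul_zero, add_zero, zero_add, neg_zero, neg_neg] at hDe1x hDe2x hDe3x hDe4x
  -- hDe1x : D u₁ = (-d12) • J u₁ ; hDe2x : D (J u₁) = d12 • u₁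
  -- hDe3x : D u₂ = (-d14) • J u₁ + (-d12) • J u₂
  -- hDe4x : D (J u₂) = d14 • u₁ + d12 • u₂
  -- d12 = 0 via nilpotency of D
  have hDD : D (D u₁) = (-(d12 ^ 2)) • u₁ := by
    rw [hDe1x, map_smul, hDe2x, smul_smul]
    congr 1
    ring
  have auxD : ∀ j : ℕ, (D ^ (2 * j)) u₁ = ((-(d12 ^ 2)) ^ j) • u₁ := by
    intro j
    induction j with
    | zero => simp
    | succ n ih =>
      have h2 : 2 * (n + 1) = 2 * n + 2 := by ring
      rw [h2, pow_add, Module.End.mul_apply]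
      have h3 : (D ^ 2) u₁ = D (D u₁) := by rw [pow_two, Module.End.mul_apply]
      rw [h3, hDD, map_smul, ih, smul_smul, pow_succ]
      congr 1
      ring
  obtain ⟨k2, hk2⟩ := hDnil
  have hzero2 : (D ^ (2 * (k2 + 1))) u₁ = 0 := by
    have h2 : 2 * (k2 + 1) = k2 + (k2 + 2) := by ring
    rw [h2, pow_add, Module.End.mul_apply, hk2, LinearMap.zero_apply]
  have hd12z : d12 = 0 := by
    have h0 := auxD (k2 + 1)
    rw [hzero2] at h0
    rcases smul_eq_zero.mp h0.symm with h | h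
    · have h1 : -(d12 ^ 2) = 0 := pow_eq_zero_iff (Nat.succ_ne_zero k2) |>.mp h
      have h2 : d12 ^ 2 = 0 := by linarith
      exact pow_eq_zero_iff (by norm_num : (2:ℕ) ≠ 0) |>.mp h2
    · exact absurd h hu₁0
  subst hd12z
  simp only [neg_zero, zero_smul, add_zero, zero_add] at hDe1x hDe2x hDe3x hDe4x
  -- final assembly
  refine ⟨⟨hli, hspan⟩, ⟨ht, t12, h12, t14, t22, hJ12, t24, hu₂iso, t34, t44⟩,
    ⟨-r, -d14, neg_ne_zero.mpr hr0, ?_, ?_, ?_, ?_, ?_, ?_⟩⟩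
  · rw [hFe3x]
  · rw [hFe4x]; module
  · rw [hDe3x]
  · rw [hDe4x]; module
  · exact hDe1x
  · exact hDe2x
end

section
/- The 8-dimensional pseudo-Hermitian quadratic Lie algebras T*₀k and T*_{θ₃}k are not isomorphic as Lie algebras: the center of T*₀k has dimension 5 and T*₀k is 2-step nilpotent, while the center of T*_{θ₃}k has dimension 3 and T*_{θ₃}k is 3-step nilpotent. -/
open TensorProduct

/-! ### Auxiliary lemmas for statement 18 -/

@[simp] lemma cons_val_five' {α : Type*} {m : ℕ} (x : α)
    (u : Fin m.succ.succ.succ.succ.succ → α) :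
    Matrix.vecCons x u 5 =
      Matrix.vecHead (Matrix.vecTail (Matrix.vecTail (Matrix.vecTail (Matrix.vecTail u)))) := rfl

@[simp] lemma cons_val_six' {α : Type*} {m : ℕ} (x : α)
    (u : Fin m.succ.succ.succ.succ.succ.succ → α) :
    Matrix.vecCons x u 6 =
      Matrix.vecHead (Matrix.vecTail (Matrix.vecTail (Matrix.vecTail
        (Matrix.vecTail (Matrix.vecTail u))))) := rfl

@[simp] lemma cons_val_seven' {α : Type*} {m : ℕ} (x : α)
    (u : Fin m.succ.succ.succ.succ.succ.succ.succ → α) :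
    Matrix.vecCons x u 7 =
      Matrix.vecHead (Matrix.vecTail (Matrix.vecTail (Matrix.vecTail
        (Matrix.vecTail (Matrix.vecTail (Matrix.vecTail u)))))) := rfl

lemma brT0_add' (a b y : Fin 8 → ℝ) : brT0 (a + b) y = brT0 a y + brT0 b y := by
  funext i; fin_cases i <;> simp [brT0] <;> ring

lemma brT0_smul' (c : ℝ) (a y : Fin 8 → ℝ) : brT0 (c • a) y = c • brT0 a y := by
  funext i; fin_cases i <;> simp [brT0] <;> ring

lemma brT3_add' (a b y : Fin 8 → ℝ) : brT3 (a + b) y = brT3 a y + brT3 b y := by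
  funext i; fin_cases i <;> simp [brT3] <;> ring

lemma brT3_smul' (c : ℝ) (a y : Fin 8 → ℝ) : brT3 (c • a) y = c • brT3 a y := by
  funext i; fin_cases i <;> simp [brT3] <;> ring

lemma brT0_nil (a b c : Fin 8 → ℝ) : brT0 (brT0 a b) c = 0 := by
  funext i; fin_cases i <;> simp [brT0]

/-- Every element of the first lcs term of `brT0` brackets to zero. -/
lemma brT0_lcs1 : ∀ z ∈ lcsW brT0 ⊤ 1, ∀ y, brT0 z y = 0 := by
  intro z hz
  rw [show lcsW brT0 (⊤ : Submodule ℝ (Fin 8 → ℝ)) 1 =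
    Submodule.span ℝ {w | ∃ x ∈ lcsW brT0 ⊤ 0, ∃ y ∈ (⊤ : Submodule ℝ (Fin 8 → ℝ)),
      w = brT0 x y} from rfl] at hz
  induction hz using Submodule.span_induction with
  | mem w hw =>
    obtain ⟨x, -, y, -, rfl⟩ := hw
    exact fun c => brT0_nil x y c
  | zero =>
    intro y; funext i; fin_cases i <;> simp [brT0]
  | add u v hu hv ihu ihv =>
    intro y; rw [brT0_add', ihu y, ihv y, add_zero]
  | smul c u hu ihu =>
    intro y; rw [brT0_smul', ihu y, smul_zero]

/-- Elements of the first lcs term of `brT3` have vanishing coordinates 0, 1, 3. -/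
lemma brT3_lcs1 : ∀ z ∈ lcsW brT3 ⊤ 1, z 0 = 0 ∧ z 1 = 0 ∧ z 3 = 0 := by
  intro z hz
  rw [show lcsW brT3 (⊤ : Submodule ℝ (Fin 8 → ℝ)) 1 =
    Submodule.span ℝ {w | ∃ x ∈ lcsW brT3 ⊤ 0, ∃ y ∈ (⊤ : Submodule ℝ (Fin 8 → ℝ)),
      w = brT3 x y} from rfl] at hz
  induction hz using Submodule.span_induction with
  | mem w hw =>
    obtain ⟨x, -, y, -, rfl⟩ := hw
    refine ⟨?_, ?_, ?_⟩ <;> simp [brT3]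
  | zero => simp
  | add u v hu hv ihu ihv =>
    obtain ⟨h1, h2, h3⟩ := ihu; obtain ⟨k1, k2, k3⟩ := ihv
    refine ⟨?_, ?_, ?_⟩ <;> simp [h1, h2, h3, k1, k2, k3]
  | smul c u hu ihu =>
    obtain ⟨h1, h2, h3⟩ := ihu
    refine ⟨?_, ?_, ?_⟩ <;> simp [h1, h2, h3]

/-- Every element of the second lcs term of `brT3` brackets to zero. -/
lemma brT3_lcs2 : ∀ z ∈ lcsW brT3 ⊤ 2, ∀ y, brT3 z y = 0 := by
  intro z hz
  rw [show lcsW brT3 (⊤ : Submodule ℝ (Fin 8 → ℝ)) 2 =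
    Submodule.span ℝ {w | ∃ x ∈ lcsW brT3 ⊤ 1, ∃ y ∈ (⊤ : Submodule ℝ (Fin 8 → ℝ)),
      w = brT3 x y} from rfl] at hz
  induction hz using Submodule.span_induction with
  | mem w hw =>
    obtain ⟨x, hx, y, -, rfl⟩ := hw
    obtain ⟨h0, h1, h3⟩ := brT3_lcs1 x hx
    intro c; funext i; fin_cases i <;> simp [brT3, h0, h1, h3]
  | zero =>
    intro y; funext i; fin_cases i <;> simp [brT3]
  | add u v hu hv ihu ihv =>
    intro y; rw [brT3_add', ihu y, ihv y, add_zero]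
  | smul c u hu ihu =>
    intro y; rw [brT3_smul', ihu y, smul_zero]

/-- The standard basis vector `eV i` of `ℝ⁸`. -/
noncomputable def eV (i : Fin 8) : Fin 8 → ℝ := Pi.single i 1

/-- `T*₀k` and `T*_{θ₃}k` are not isomorphic as Lie algebras: the
center of `T*₀k` is 5-dimensional and `T*₀k` is 2-step nilpotent, while the center
of `T*_{θ₃}k` is 3-dimensional and `T*_{θ₃}k` is 3-step nilpotent. -/
theorem stmt_18 :
    (¬ ∃ ψ : (Fin 8 → ℝ) ≃ₗ[ℝ] (Fin 8 → ℝ),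
      ∀ x y : Fin 8 → ℝ, ψ (brT0 x y) = brT3 (ψ x) (ψ y)) ∧
    (∃ W : Submodule ℝ (Fin 8 → ℝ),
      (W : Set (Fin 8 → ℝ)) = {x | ∀ y : Fin 8 → ℝ, brT0 x y = 0} ∧
      Module.finrank ℝ W = 5) ∧
    lcsW brT0 ⊤ 2 = ⊥ ∧ lcsW brT0 ⊤ 1 ≠ ⊥ ∧
    (∃ W : Submodule ℝ (Fin 8 → ℝ),
      (W : Set (Fin 8 → ℝ)) = {x | ∀ y : Fin 8 → ℝ, brT3 x y = 0} ∧
      Module.finrank ℝ W = 3) ∧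
    lcsW brT3 ⊤ 3 = ⊥ ∧ lcsW brT3 ⊤ 2 ≠ ⊥ := by
  refine ⟨?_, ?_, ?_, ?_, ?_, ?_, ?_⟩
  · rintro ⟨ψ, hψ⟩
    have key : ∀ u v w : Fin 8 → ℝ, brT3 (brT3 u v) w = 0 := by
      intro u v w
      have h1 : brT3 u v = ψ (brT0 (ψ.symm u) (ψ.symm v)) := by
        rw [hψ]; simp
      have h2 : brT3 (brT3 u v) w
          = ψ (brT0 (brT0 (ψ.symm u) (ψ.symm v)) (ψ.symm w)) := by
        rw [hψ]; rw [h1]; simp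
      rw [h2, brT0_nil, map_zero]
    have h := congrFun (key (eV 0) (eV 1) (eV 3)) 4
    have : brT3 (brT3 (eV 0) (eV 1)) (eV 3) 4 = 1 := by
      simp [brT3, eV, Pi.single_apply]
    rw [h] at this
    norm_num at this
  · -- center of brT0 has dimension 5
    set L : (Fin 8 → ℝ) →ₗ[ℝ] (Fin 3 → ℝ) :=
      LinearMap.pi ![LinearMap.proj 0, LinearMap.proj 1, LinearMap.proj 6] with hL
    refine ⟨LinearMap.ker L, ?_, ?_⟩
    · ext x
      simp only [SetLike.mem_coe, LinearMap.mem_ker, Set.mem_setOf_eq]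
      constructor
      · intro hx y
        have h0 : x 0 = 0 := congrFun hx 0
        have h1 : x 1 = 0 := congrFun hx 1
        have h6 : x 6 = 0 := congrFun hx 2
        funext i; fin_cases i <;> simp [brT0, h0, h1, h6]
      · intro h
        funext i
        fin_cases i
        · have := congrFun (h (eV 1)) 2
          simpa [brT0, eV, Pi.single_apply, L] using this
        · have := congrFun (h (eV 0)) 2
          simp only [brT0, eV, Pi.single_apply, L] at this ⊢
          simp at this ⊢
          linarith [this]
        · have := congrFun (h (eV 0)) 5
          simpa [brT0, eV, Pi.single_apply, L] using this
    · have hsurj : Function.Surjective L := by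
        intro c
        refine ⟨![c 0, c 1, 0, 0, 0, 0, c 2, 0], ?_⟩
        funext i; fin_cases i <;> simp [L]
      have hrank := LinearMap.finrank_range_add_finrank_ker L
      rw [LinearMap.range_eq_top.mpr hsurj] at hrank
      simp only [finrank_top] at hrank
      have h3 : Module.finrank ℝ (Fin 3 → ℝ) = 3 := by simp
      have h8 : Module.finrank ℝ (Fin 8 → ℝ) = 8 := by simp
      omega
  · -- lcsW brT0 ⊤ 2 = ⊥
    rw [show lcsW brT0 (⊤ : Submodule ℝ (Fin 8 → ℝ)) 2 =
      Submodule.span ℝ {w | ∃ x ∈ lcsW brT0 ⊤ 1, ∃ y ∈ (⊤ : Submodule ℝ (Fin 8 → ℝ)),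
        w = brT0 x y} from rfl]
    rw [Submodule.span_eq_bot]
    rintro w ⟨x, hx, y, -, rfl⟩
    exact brT0_lcs1 x hx y
  · -- lcsW brT0 ⊤ 1 ≠ ⊥
    intro h
    have hmem : brT0 (eV 0) (eV 1) ∈ lcsW brT0 (⊤ : Submodule ℝ (Fin 8 → ℝ)) 1 := by
      rw [show lcsW brT0 (⊤ : Submodule ℝ (Fin 8 → ℝ)) 1 =
        Submodule.span ℝ {w | ∃ x ∈ lcsW brT0 ⊤ 0, ∃ y ∈ (⊤ : Submodule ℝ (Fin 8 → ℝ)),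
          w = brT0 x y} from rfl]
      exact Submodule.subset_span ⟨eV 0, Submodule.mem_top, eV 1, Submodule.mem_top, rfl⟩
    rw [h, Submodule.mem_bot] at hmem
    have := congrFun hmem 2
    simp [brT0, eV, Pi.single_apply] at this
  · -- center of brT3 has dimension 3
    set L : (Fin 8 → ℝ) →ₗ[ℝ] (Fin 5 → ℝ) :=
      LinearMap.pi ![LinearMap.proj 0, LinearMap.proj 1, LinearMap.proj 2,
        LinearMap.proj 3, LinearMap.proj 6] with hL
    refine ⟨LinearMap.ker L, ?_, ?_⟩
    · ext x
      simp only [SetLike.mem_coe, LinearMap.mem_ker, Set.mem_setOf_eq]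
      constructor
      · intro hx y
        have h0 : x 0 = 0 := congrFun hx 0
        have h1 : x 1 = 0 := congrFun hx 1
        have h2 : x 2 = 0 := congrFun hx 2
        have h3 : x 3 = 0 := congrFun hx 3
        have h6 : x 6 = 0 := congrFun hx 4
        funext i; fin_cases i <;> simp [brT3, h0, h1, h2, h3, h6]
      · intro h
        funext i
        fin_cases i
        · have := congrFun (h (eV 1)) 2
          simpa [brT3, eV, Pi.single_apply, L] using this
        · have := congrFun (h (eV 0)) 2
          simp only [brT3, eV, Pi.single_apply, L] at this ⊢
          simp at this ⊢
          linarith [this]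
        · have := congrFun (h (eV 3)) 4
          simpa [brT3, eV, Pi.single_apply, L] using this
        · have := congrFun (h (eV 2)) 4
          simp only [brT3, eV, Pi.single_apply, L] at this ⊢
          simp at this ⊢
          linarith [this]
        · have := congrFun (h (eV 0)) 5
          simpa [brT3, eV, Pi.single_apply, L] using this
    · have hsurj : Function.Surjective L := by
        intro c
        refine ⟨![c 0, c 1, c 2, c 3, 0, 0, c 4, 0], ?_⟩
        funext i; fin_cases i <;> simp [L]
      have hrank := LinearMap.finrank_range_add_finrank_ker L
      rw [LinearMap.range_eq_top.mpr hsurj] at hrank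
      simp only [finrank_top] at hrank
      have h5 : Module.finrank ℝ (Fin 5 → ℝ) = 5 := by simp
      have h8 : Module.finrank ℝ (Fin 8 → ℝ) = 8 := by simp
      omega
  · -- lcsW brT3 ⊤ 3 = ⊥
    rw [show lcsW brT3 (⊤ : Submodule ℝ (Fin 8 → ℝ)) 3 =
      Submodule.span ℝ {w | ∃ x ∈ lcsW brT3 ⊤ 2, ∃ y ∈ (⊤ : Submodule ℝ (Fin 8 → ℝ)),
        w = brT3 x y} from rfl]
    rw [Submodule.span_eq_bot]
    rintro w ⟨x, hx, y, -, rfl⟩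
    exact brT3_lcs2 x hx y
  · -- lcsW brT3 ⊤ 2 ≠ ⊥
    intro h
    have hmem1 : brT3 (eV 0) (eV 1) ∈ lcsW brT3 (⊤ : Submodule ℝ (Fin 8 → ℝ)) 1 := by
      rw [show lcsW brT3 (⊤ : Submodule ℝ (Fin 8 → ℝ)) 1 =
        Submodule.span ℝ {w | ∃ x ∈ lcsW brT3 ⊤ 0, ∃ y ∈ (⊤ : Submodule ℝ (Fin 8 → ℝ)),
          w = brT3 x y} from rfl]
      exact Submodule.subset_span ⟨eV 0, Submodule.mem_top, eV 1, Submodule.mem_top, rfl⟩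
    have hmem : brT3 (brT3 (eV 0) (eV 1)) (eV 3)
        ∈ lcsW brT3 (⊤ : Submodule ℝ (Fin 8 → ℝ)) 2 := by
      rw [show lcsW brT3 (⊤ : Submodule ℝ (Fin 8 → ℝ)) 2 =
        Submodule.span ℝ {w | ∃ x ∈ lcsW brT3 ⊤ 1, ∃ y ∈ (⊤ : Submodule ℝ (Fin 8 → ℝ)),
          w = brT3 x y} from rfl]
      exact Submodule.subset_span ⟨brT3 (eV 0) (eV 1), hmem1, eV 3, Submodule.mem_top, rfl⟩
    rw [h, Submodule.mem_bot] at hmem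
    have := congrFun hmem 4
    simp [brT3, eV, Pi.single_apply] at this
end
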